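/- arXiv:1603.05795 — 8 statements merged into one kernel-verified Lean document; each statement's English description precedes it below -/
import Mathlib

section
/- Let S be an arc of F_q^k with |S| ≥ k, and let A be a subset of S with |A| = k−2. Then the number of hyperplanes (i.e., (k−1)-dimensional linear subspaces) H of F_q^k with H ∩ S = A is exactly q+k−1−|S|. -/
open Finset

variable {F : Type*} [Field F]

/-- An *arc*: every `k`-subset is a set of linearly independent vectors
(hence a basis of `F^k`). -/
def IsArc {k : ℕ} (S : Set (Fin k → F)) : Prop :=
  ∀ T : Finset (Fin k → F), ↑T ⊆ S → T.card = k →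
    LinearIndependent F (Subtype.val : {x // x ∈ T} → (Fin k → F))

/-- The *weight* of a vector: its number of nonzero coordinates. -/
noncomputable def weight {ι : Type*} (w : ι → F) : ℕ := Nat.card {i // w i ≠ 0}

/-- `det(u, C)`: the determinant of the `k × k` matrix whose first row is `u` and whose
remaining rows are the vectors `g i`, `i ∈ C`, listed in increasing order of the index set. -/
noncomputable def detWith {k m : ℕ} (g : Fin m → Fin k → F)
    (u : Fin k → F) (C : Finset (Fin m)) : F :=
  if h : C.card + 1 = k then
    Matrix.det (Matrix.of ((Fin.cons u fun j => g (C.orderEmbOfFin rfl j)) ∘ Fin.cast h.symm))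
  else 0

/-- The matrix `M_n` associated to an ordered arc `g : Fin m → (Fin k → F)`. -/
noncomputable def arcMatrix {k m : ℕ} (g : Fin m → Fin k → F) (n : ℕ) :
    Matrix {C : Finset (Fin m) // C.card = k - 1}
      {AE : Finset (Fin m) × Finset (Fin m) //
        AE.2.card = m - n ∧ AE.1 ⊆ AE.2 ∧ AE.1.card = k - 2} F :=
  fun C AE =>
    if AE.1.1 ⊆ C.1 then ∏ u ∈ Finset.univ \ AE.1.2, detWith g (g u) C.1 else 0

/-- `det(z, Y₁, …, Y_{k-1})`. -/
noncomputable def detRows {k : ℕ} (z : Fin k → F) (Y : Fin (k - 1) → Fin k → F) : F :=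
  if h : k - 1 + 1 = k then Matrix.det (Matrix.of ((Fin.cons z Y) ∘ Fin.cast h.symm)) else 0

/-- `d_A(u,v) = det(u, v, p₁, …, p_{k-2})` for an ordered tuple `A = (p₁, …, p_{k-2})`. -/
noncomputable def dA {k : ℕ} (p : Fin (k - 2) → Fin k → F) (u v : Fin k → F) : F :=
  if h : k - 2 + 1 + 1 = k then
    Matrix.det (Matrix.of ((Fin.cons u (Fin.cons v p)) ∘ Fin.cast h.symm))
  else 0

/-- `f` is a tangent polynomial for the `(k-2)`-subset `A` of the arc `S`:
a product of `t` pairwise linearly independent linear forms whose kernels meet `S` in `A`. -/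
def IsTangentPoly {k : ℕ} (t : ℕ) (S A : Set (Fin k → F)) (f : (Fin k → F) → F) : Prop :=
  ∃ α : Fin t → ((Fin k → F) →ₗ[F] F),
    (∀ i j, i ≠ j → LinearIndependent F ![α i, α j]) ∧
    (∀ i, S ∩ {x | α i x = 0} = A) ∧
    ∀ x, f x = ∏ i, α i x

/-- Compatible families `(α_A)` (on `(k-2)`-subsets) and `(α_C)` (on `(k-1)`-subsets)
of nonzero scalars, relative to the tangent polynomials `f`. -/
def CompatibleFamilies {k m : ℕ} (t : ℕ) (g : Fin m → Fin k → F)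
    (f : Finset (Fin m) → (Fin k → F) → F) (a c : Finset (Fin m) → F) : Prop :=
  (∀ A : Finset (Fin m), A.card = k - 2 → a A ≠ 0) ∧
  (∀ C : Finset (Fin m), C.card = k - 1 → c C ≠ 0) ∧
  ∀ A : Finset (Fin m), A.card = k - 2 → ∀ e, e ∉ A →
    c (insert e A) =
      (-1 : F) ^ ((A.filter fun i => e < i).card * (t + 1)) * a A * f A (g e)

/-- The polynomial `φ(Y₁, …, Y_{k-1}) = Σ_C (α_C)^e ∏_{z ∈ E∖C} det(z,Y)/det(z,C)`. -/
noncomputable def phiPoly {k M : ℕ} (e : ℕ) (g : Fin M → Fin k → F)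
    (c : Finset (Fin M) → F) (E : Finset (Fin M)) (Y : Fin (k - 1) → Fin k → F) : F :=
  ∑ C ∈ E.powersetCard (k - 1), (c C) ^ e *
    ∏ z ∈ E \ C, detRows (g z) Y / detWith g (g z) C

/-- `(G, n)` has *Property W*. -/
def PropertyW {k m : ℕ} (g : Fin m → Fin k → F) (n : ℕ) : Prop :=
  ∀ A : Finset (Fin m), A.card = k - 2 →
    ∃ (C : Finset (Fin m)) (Cs : Fin (m - n - k + 1) → Finset (Fin m)),
      C.card = k - 1 ∧ A ⊆ C ∧
      (∀ i, (Cs i).card = k - 1 ∧ A ⊆ Cs i ∧ Cs i ≠ C) ∧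
      Function.Injective Cs ∧
      ∀ i, ∃ x, ∀ D : {C : Finset (Fin m) // C.card = k - 1},
        ((arcMatrix g n).mulVec x) D ≠ 0 ↔ (D.1 = C ∨ D.1 = Cs i)

/-!
Let `W` be the span of `A`, a subspace of dimension `k - 2`. Hyperplanes through `W` are the
points of the projective line `ℙ(F^k ⧸ W)`, so there are `q + 1` of them. Such a hyperplane
either meets `S` exactly in `A`, or it contains some `x ∈ S \ A` and is then `span (A ∪ {x})`.
Since any `k` points of `S` are independent, distinct `x` give distinct hyperplanes, so exactly
`|S| - (k - 2)` of the `q + 1` hyperplanes through `W` are not tangent.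
-/

open Module

namespace Submodule

variable {V : Type*} [AddCommGroup V] [Module F V] [FiniteDimensional F V]

theorem finrank_map_mkQ_add_finrank {W H : Submodule F V} (hWH : W ≤ H) :
    finrank F (H.map W.mkQ) + finrank F W = finrank F H := by
  have h := LinearMap.finrank_range_add_finrank_ker (W.mkQ.domRestrict H)
  rw [LinearMap.range_domRestrict, LinearMap.ker_domRestrict, ker_mkQ] at h
  rw [← h, (comapSubtypeEquivOfLe hWH).finrank_eq]

noncomputable def equivSubmoduleQuotientOfFinrank (W : Submodule F V) (d : ℕ) :
    {H : Submodule F V // W ≤ H ∧ finrank F H = finrank F W + d} ≃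
      {L : Submodule F (V ⧸ W) // finrank F L = d} where
  toFun H := ⟨H.1.map W.mkQ, by
    have := finrank_map_mkQ_add_finrank H.2.1
    omega⟩
  invFun L := ⟨L.1.comap W.mkQ, W.le_comap_mkQ L.1, by
    have := finrank_map_mkQ_add_finrank (W.le_comap_mkQ L.1)
    rw [map_comap_eq_of_surjective W.mkQ_surjective, L.2] at this
    omega⟩
  left_inv H := Subtype.ext <| by
    simp only [comap_map_eq, ker_mkQ, sup_eq_left.mpr H.2.1]
  right_inv L := Subtype.ext <| map_comap_eq_of_surjective W.mkQ_surjective L.1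

theorem card_superspace_finrank_succ [Finite F] (W : Submodule F V)
    (hW : finrank F V = finrank F W + 2) :
    Nat.card {H : Submodule F V // W ≤ H ∧ finrank F H = finrank F W + 1} = Nat.card F + 1 := by
  have hQ : finrank F (V ⧸ W) = 2 := by
    have := W.finrank_quotient_add_finrank
    omega
  rw [Nat.card_congr ((W.equivSubmoduleQuotientOfFinrank 1).trans
    (Projectivization.equivSubmodule F (V ⧸ W)).symm)]
  exact Projectivization.card_of_finrank_two F (V ⧸ W) hQ

end Submodule

open Submodule

section Arc

variable {V : Type*} [AddCommGroup V] [Module F V] [DecidableEq V] {S A : Finset V}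

theorem finrank_span_insert_of_mem_sdiff
    (hS : ∀ T ⊆ S, T.card ≤ finrank F V → LinearIndepOn F id (T : Set V))
    (hAS : A ⊆ S) (hA : A.card + 2 = finrank F V) {x : V} (hx : x ∈ S \ A) :
    finrank F (span F (insert x A : Set V)) = A.card + 1 := by
  obtain ⟨hxS, hxA⟩ := Finset.mem_sdiff.mp hx
  have hcard : (insert x A).card = A.card + 1 := Finset.card_insert_of_notMem hxA
  rw [← Finset.coe_insert, finrank_span_finset_eq_card
    (hS _ (Finset.insert_subset hxS hAS) (by omega)), hcard]

theorem eq_span_insert_of_mem [FiniteDimensional F V]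
    (hS : ∀ T ⊆ S, T.card ≤ finrank F V → LinearIndepOn F id (T : Set V))
    (hAS : A ⊆ S) (hA : A.card + 2 = finrank F V) {H : Submodule F V}
    (hAH : span F (A : Set V) ≤ H) (hH : finrank F H = A.card + 1)
    {x : V} (hx : x ∈ S \ A) (hxH : x ∈ H) :
    H = span F (insert x A : Set V) := by
  have hle : span F (insert x A : Set V) ≤ H := by
    rw [span_le, Set.insert_subset_iff]
    exact ⟨hxH, subset_span.trans hAH⟩
  exact (eq_of_le_of_finrank_eq hle
    (by rw [finrank_span_insert_of_mem_sdiff hS hAS hA hx, hH])).symm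

theorem injOn_span_insert
    (hS : ∀ T ⊆ S, T.card ≤ finrank F V → LinearIndepOn F id (T : Set V))
    (hAS : A ⊆ S) (hA : A.card + 2 = finrank F V) :
    Set.InjOn (fun x => span F (insert x A : Set V)) (S \ A : Finset V) := by
  intro x hx y hy hxy
  by_contra hne
  obtain ⟨hxS, hxA⟩ := Finset.mem_sdiff.mp hx
  obtain ⟨hyS, hyA⟩ := Finset.mem_sdiff.mp hy
  have hcard : (insert x (insert y A)).card ≤ finrank F V :=
    (Finset.card_insert_le _ _).trans (by have := Finset.card_insert_le y A; omega)
  have hind := hS _ (Finset.insert_subset hxS (Finset.insert_subset hyS hAS)) hcard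
  rw [Finset.coe_insert, Finset.coe_insert,
    linearIndepOn_id_insert (by simp [hne, hxA])] at hind
  have hspan : span F (insert x A : Set V) = span F (insert y A : Set V) := hxy
  exact hind.2 (hspan ▸ subset_span (Set.mem_insert x _))

theorem card_tangent_hyperplanes_add_card_sdiff [Finite F] [FiniteDimensional F V]
    (hS : ∀ T ⊆ S, T.card ≤ finrank F V → LinearIndepOn F id (T : Set V))
    (hAS : A ⊆ S) (hA : A.card + 2 = finrank F V) :
    Nat.card {H : Submodule F V // finrank F H = A.card + 1 ∧ ↑S ∩ (H : Set V) = ↑A}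
      + (S.card - A.card) = Nat.card F + 1 := by
  have hW : finrank F (span F (A : Set V)) = A.card :=
    finrank_span_finset_eq_card (hS A hAS (by omega))
  set 𝒳 : Set (Submodule F V) := {H | span F (A : Set V) ≤ H ∧ finrank F H = A.card + 1}
  set 𝒯 : Set (Submodule F V) := {H | finrank F H = A.card + 1 ∧ ↑S ∩ (H : Set V) = ↑A}
  have h𝒯𝒳 : 𝒯 ⊆ 𝒳 := fun H ⟨hH, hSH⟩ =>
    ⟨span_le.mpr (hSH ▸ Set.inter_subset_right), hH⟩
  have hdiff : 𝒳 \ 𝒯 = (fun x => span F (insert x A : Set V)) '' (S \ A : Finset V) := by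
    ext H
    constructor
    · rintro ⟨⟨hAH, hH⟩, hnot⟩
      have hsub : (A : Set V) ⊆ ↑S ∩ (H : Set V) :=
        Set.subset_inter (Finset.coe_subset.mpr hAS) (subset_span.trans hAH)
      obtain ⟨x, ⟨hxS, hxH⟩, hxA⟩ := Set.exists_of_ssubset
        (hsub.ssubset_of_ne fun h => hnot ⟨hH, h.symm⟩)
      have hx : x ∈ S \ A := Finset.mem_sdiff.mpr ⟨hxS, hxA⟩
      exact ⟨x, hx, (eq_span_insert_of_mem hS hAS hA hAH hH hx hxH).symm⟩
    · rintro ⟨x, hx, rfl⟩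
      obtain ⟨hxS, hxA⟩ := Finset.mem_sdiff.mp hx
      refine ⟨⟨span_mono (Set.subset_insert _ _),
        finrank_span_insert_of_mem_sdiff hS hAS hA hx⟩, fun ⟨_, hSH⟩ => hxA ?_⟩
      exact Finset.mem_coe.mp (hSH ▸ ⟨hxS, subset_span (Set.mem_insert x _)⟩)
  have h𝒳 : Nat.card 𝒳 = Nat.card F + 1 := by
    rw [← (span F (A : Set V)).card_superspace_finrank_succ (by omega), hW]
    rfl
  rw [Nat.card_coe_set_eq] at h𝒳
  have hsplit := Set.ncard_sdiff_add_ncard_of_subset h𝒯𝒳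
    (Set.finite_of_ncard_ne_zero (by omega))
  rw [hdiff, (injOn_span_insert hS hAS hA).ncard_image, Set.ncard_coe_finset,
    Finset.card_sdiff_of_subset hAS] at hsplit
  change 𝒯.ncard + _ = _
  omega

end Arc

theorem IsArc.linearIndepOn_of_card_le {k : ℕ} {S : Finset (Fin k → F)}
    (hS : IsArc (S : Set (Fin k → F))) (hSk : k ≤ S.card) {T : Finset (Fin k → F)}
    (hTS : T ⊆ S) (hTk : T.card ≤ k) : LinearIndepOn F id (T : Set (Fin k → F)) := by
  obtain ⟨B, hTB, hBS, hBk⟩ := Finset.exists_subsuperset_card_eq hTS hTk hSk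
  have hB : LinearIndepOn F id (B : Set (Fin k → F)) := hS B (Finset.coe_subset.mpr hBS) hBk
  exact hB.mono (Finset.coe_subset.mpr hTB)

theorem stmt1 [Fintype F] {k : ℕ} (hk : 3 ≤ k)
    (S : Finset (Fin k → F)) (hS : IsArc (↑S : Set (Fin k → F))) (hSk : k ≤ S.card)
    (A : Finset (Fin k → F)) (hA : A ⊆ S) (hAcard : A.card = k - 2) :
    Nat.card {H : Submodule F (Fin k → F) //
        Module.finrank F H = k - 1 ∧ (↑S ∩ (H : Set (Fin k → F))) = ↑A}
      + S.card = Fintype.card F + k - 1 := by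
  classical
  have hdim : finrank F (Fin k → F) = k := Module.finrank_fin_fun F
  have hcount := card_tangent_hyperplanes_add_card_sdiff
    (fun T hTS hTk => hS.linearIndepOn_of_card_le hSk hTS (by rwa [hdim] at hTk)) hA (by omega)
  rw [show k - 1 = A.card + 1 by omega]
  have hAS := Finset.card_le_card hA
  rw [Nat.card_eq_fintype_card (α := F)] at hcount
  omega
end

section
/- Let S be an arc of F_q^k with |S| ≥ k and let t = q+k−1−|S|. Then the number of co-secants to S is exactly binom(|S|, k−2)·t. -/
open Finset

variable {F : Type*} [Field F]

/-!
A co-secant `H` meets `S` in a `(k-2)`-subset `A`, so we count, for each such `A`, the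
hyperplanes through `W = span A`. These correspond to the `q + 1` points of the projective
line `ℙ(F^k ⧸ W)`. Each `s ∈ S \ A` lies on exactly one of them, namely `span (A ∪ {s})`, and
these are pairwise distinct because any `k` points of an arc span `F^k`; the remaining
`q + 1 - (|S| - (k - 2))` hyperplanes meet `S` exactly in `A`.
-/

theorem Submodule.finrank_comap_mkQ {K V : Type*} [Field K] [AddCommGroup V] [Module K V]
    [FiniteDimensional K V] (W : Submodule K V) (L : Submodule K (V ⧸ W)) :
    Module.finrank K (L.comap W.mkQ) = Module.finrank K L + Module.finrank K W := by
  have h := LinearMap.finrank_range_add_finrank_ker (W.mkQ.domRestrict (L.comap W.mkQ))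
  rw [LinearMap.range_domRestrict, Submodule.map_comap_eq, Submodule.range_mkQ, top_inf_eq,
    LinearMap.ker_domRestrict, Submodule.ker_mkQ,
    (Submodule.comapSubtypeEquivOfLe (Submodule.le_comap_mkQ W L)).finrank_eq] at h
  exact h.symm

noncomputable def Submodule.equivProjectivizationQuotient {K V : Type*} [Field K]
    [AddCommGroup V] [Module K V] [FiniteDimensional K V] (W : Submodule K V) :
    {H : Submodule K V // W ≤ H ∧ Module.finrank K H = Module.finrank K W + 1} ≃
      Projectivization K (V ⧸ W) :=
  calc {H : Submodule K V // W ≤ H ∧ Module.finrank K H = Module.finrank K W + 1}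
      ≃ {H : Set.Ici W // Module.finrank K H.1 = Module.finrank K W + 1} :=
        (Equiv.subtypeSubtypeEquivSubtypeInter _ _).symm
    _ ≃ {L : Submodule K (V ⧸ W) // Module.finrank K L = 1} :=
        (W.comapMkQRelIso.toEquiv.subtypeEquiv fun L => by
          change _ ↔ Module.finrank K (L.comap W.mkQ) = _
          rw [Submodule.finrank_comap_mkQ]; omega).symm
    _ ≃ Projectivization K (V ⧸ W) := (Projectivization.equivSubmodule K (V ⧸ W)).symm

theorem Submodule.card_finrank_eq_add_one_of_le [Finite F] {V : Type*} [AddCommGroup V]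
    [Module F V] [FiniteDimensional F V] (W : Submodule F V)
    (hW : Module.finrank F W + 2 = Module.finrank F V) :
    Nat.card {H : Submodule F V // W ≤ H ∧ Module.finrank F H = Module.finrank F W + 1} =
      Nat.card F + 1 := by
  rw [Nat.card_congr W.equivProjectivizationQuotient,
    Projectivization.card_of_finrank_two]
  have := W.finrank_quotient_add_finrank
  omega

theorem Nat.card_subtype_and_mem_eq_sum {α β : Type*} [Finite α]
    (P : α → Prop) (f : α → β) (s : Finset β) :
    Nat.card {a // P a ∧ f a ∈ s} = ∑ b ∈ s, Nat.card {a // P a ∧ f a = b} := by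
  classical
  have := Fintype.ofFinite α
  simp only [Nat.card_eq_fintype_card, Fintype.card_subtype]
  rw [card_eq_sum_card_fiberwise (f := f) (t := s) (fun a ha => (mem_filter.1 ha).2.2)]
  refine sum_congr rfl fun b hb => congrArg card (ext fun a => ?_)
  simp only [mem_filter, mem_univ, true_and]
  constructor
  · exact fun h => ⟨h.1.1, h.2⟩
  · rintro ⟨hP, rfl⟩; exact ⟨⟨hP, hb⟩, rfl⟩

namespace IsArc

variable {k : ℕ} {S T A : Finset (Fin k → F)}

theorem linearIndepOn_of_subset (hS : IsArc (↑S : Set (Fin k → F))) (hSk : k ≤ S.card)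
    (hTS : T ⊆ S) (hTk : T.card ≤ k) : LinearIndepOn F id (↑T : Set (Fin k → F)) := by
  obtain ⟨T', hTT', hT'S, hT'⟩ := exists_subsuperset_card_eq hTS hTk hSk
  exact LinearIndepOn.mono (hS T' (coe_subset.2 hT'S) hT') (coe_subset.2 hTT')

theorem finrank_span_of_subset (hS : IsArc (↑S : Set (Fin k → F))) (hSk : k ≤ S.card)
    (hTS : T ⊆ S) (hTk : T.card ≤ k) :
    Module.finrank F (Submodule.span F (↑T : Set (Fin k → F))) = T.card :=
  finrank_span_finset_eq_card (hS.linearIndepOn_of_subset hSk hTS hTk)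

theorem card_lt_of_subset_submodule (hS : IsArc (↑S : Set (Fin k → F))) (hSk : k ≤ S.card)
    (hTS : T ⊆ S) {H : Submodule F (Fin k → F)} (hTH : (↑T : Set (Fin k → F)) ⊆ H)
    (hH : Module.finrank F H < k) : T.card < k := by
  by_contra! hkT
  obtain ⟨T', hT'T, hT'⟩ := exists_subset_card_eq hkT
  have hle := Submodule.finrank_mono (Submodule.span_le.2 ((coe_subset.2 hT'T).trans hTH))
  rw [hS.finrank_span_of_subset hSk (hT'T.trans hTS) hT'.le, hT'] at hle
  omega

theorem finrank_span_insert (hS : IsArc (↑S : Set (Fin k → F))) (hSk : k ≤ S.card)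
    (hAS : A ⊆ S) (hA : A.card + 2 = k) {s : Fin k → F} (hsS : s ∈ S) (hsA : s ∉ A) :
    Module.finrank F (Submodule.span F (insert s (↑A : Set (Fin k → F)))) = k - 1 := by
  classical
  rw [← coe_insert, hS.finrank_span_of_subset hSk (insert_subset hsS hAS) (by grind),
    card_insert_of_notMem hsA]
  omega

theorem span_insert_eq_of_mem (hS : IsArc (↑S : Set (Fin k → F))) (hSk : k ≤ S.card)
    (hAS : A ⊆ S) (hA : A.card + 2 = k) {H : Submodule F (Fin k → F)}
    (hH : Module.finrank F H = k - 1) (hAH : (↑A : Set (Fin k → F)) ⊆ H) {s : Fin k → F}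
    (hsS : s ∈ S) (hsA : s ∉ A) (hsH : s ∈ H) :
    Submodule.span F (insert s (↑A : Set (Fin k → F))) = H :=
  Submodule.eq_of_le_of_finrank_eq (Submodule.span_le.2 (Set.insert_subset hsH hAH))
    (by rw [hS.finrank_span_insert hSk hAS hA hsS hsA, hH])

theorem span_insert_injOn (hS : IsArc (↑S : Set (Fin k → F))) (hSk : k ≤ S.card)
    (hAS : A ⊆ S) (hA : A.card + 2 = k) :
    Set.InjOn (fun s => Submodule.span F (insert s (↑A : Set (Fin k → F)))) (↑S \ ↑A) := by
  classical
  rintro s ⟨hsS, hsA⟩ s' ⟨hs'S, hs'A⟩ (hss' : Submodule.span F _ = Submodule.span F _)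
  by_contra hne
  have hcard : (insert s (insert s' A)).card = k := by
    rw [card_insert_of_notMem (by grind), card_insert_of_notMem hs'A]
    omega
  have hfin := hS.finrank_span_insert hSk hAS hA hsS hsA
  refine (hS.card_lt_of_subset_submodule hSk (insert_subset hsS (insert_subset hs'S hAS))
    (H := Submodule.span F (insert s ↑A)) ?_ (by omega)).ne hcard
  rw [coe_insert, coe_insert]
  refine Set.insert_subset (Submodule.subset_span (Set.mem_insert _ _)) ?_
  exact Set.insert_subset (hss' ▸ Submodule.subset_span (Set.mem_insert _ _))
    ((Set.subset_insert _ _).trans Submodule.subset_span)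

theorem card_hyperplane_inter_eq [Fintype F] (hS : IsArc (↑S : Set (Fin k → F)))
    (hSk : k ≤ S.card) (hAS : A ⊆ S) (hA : A.card + 2 = k) :
    Nat.card {H : Submodule F (Fin k → F) //
        Module.finrank F H = k - 1 ∧ ↑S ∩ (H : Set (Fin k → F)) = ↑A}
      = Fintype.card F + k - 1 - S.card := by
  classical
  set W := Submodule.span F (↑A : Set (Fin k → F))
  have hW : Module.finrank F W = k - 2 := by
    rw [hS.finrank_span_of_subset hSk hAS (by omega)]
    omega
  set T := {H : Submodule F (Fin k → F) | W ≤ H ∧ Module.finrank F H = Module.finrank F W + 1}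
  set Q := (fun s => Submodule.span F (insert s (↑A : Set (Fin k → F)))) '' (↑S \ ↑A)
  have hQT : Q ⊆ T := by
    rintro _ ⟨s, ⟨hsS, hsA⟩, rfl⟩
    refine ⟨Submodule.span_mono (Set.subset_insert _ _), ?_⟩
    rw [hS.finrank_span_insert hSk hAS hA hsS hsA, hW]
    omega
  have hfiber : {H : Submodule F (Fin k → F) |
      Module.finrank F H = k - 1 ∧ ↑S ∩ (H : Set (Fin k → F)) = ↑A} = T \ Q := by
    ext H
    constructor
    · rintro ⟨hH, hSH⟩
      have hAH : (↑A : Set (Fin k → F)) ⊆ H := hSH ▸ Set.inter_subset_right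
      refine ⟨⟨Submodule.span_le.2 hAH, by omega⟩, ?_⟩
      rintro ⟨s, ⟨hsS, hsA⟩, rfl⟩
      exact hsA (hSH ▸ ⟨hsS, Submodule.subset_span (Set.mem_insert _ _)⟩)
    · rintro ⟨⟨hWH, hH⟩, hHQ⟩
      have hAH : (↑A : Set (Fin k → F)) ⊆ H := Submodule.span_le.1 hWH
      refine ⟨by omega, Set.Subset.antisymm ?_ (Set.subset_inter (coe_subset.2 hAS) hAH)⟩
      rintro s ⟨hsS, hsH⟩
      by_contra hsA
      exact hHQ ⟨s, ⟨hsS, hsA⟩,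
        hS.span_insert_eq_of_mem hSk hAS hA (by omega) hAH hsS hsA hsH⟩
  have hT : T.ncard = Fintype.card F + 1 := by
    rw [← Nat.card_coe_set_eq, ← Nat.card_eq_fintype_card]
    exact W.card_finrank_eq_add_one_of_le (by simp; omega)
  have hQ : Q.ncard = S.card - A.card := by
    rw [(hS.span_insert_injOn hSk hAS hA).ncard_image, ← coe_sdiff, Set.ncard_coe_finset,
      card_sdiff_of_subset hAS]
  change Set.ncard {H | _} = _
  rw [hfiber, Set.ncard_sdiff hQT (Set.toFinite _), hT, hQ]
  omega

end IsArc

theorem stmt2 [Fintype F] {k : ℕ} (hk : 3 ≤ k)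
    (S : Finset (Fin k → F)) (hS : IsArc (↑S : Set (Fin k → F))) (hSk : k ≤ S.card) :
    Nat.card {H : Submodule F (Fin k → F) //
        Module.finrank F H = k - 1 ∧ ((↑S : Set (Fin k → F)) ∩ ↑H).ncard = k - 2}
      = S.card.choose (k - 2) * (Fintype.card F + k - 1 - S.card) := by
  classical
  have : Finite (Submodule F (Fin k → F)) := Finite.of_injective _ SetLike.coe_injective
  have hfilter (H : Submodule F (Fin k → F)) :
      (↑(S.filter (· ∈ H)) : Set (Fin k → F)) = ↑S ∩ ↑H := by
    ext; simp
  calc _ = Nat.card {H : Submodule F (Fin k → F) //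
          Module.finrank F H = k - 1 ∧ S.filter (· ∈ H) ∈ S.powersetCard (k - 2)} := by
        simp only [← hfilter, Set.ncard_coe_finset, mem_powersetCard, filter_subset, true_and]
    _ = ∑ A ∈ S.powersetCard (k - 2), Nat.card {H : Submodule F (Fin k → F) //
          Module.finrank F H = k - 1 ∧ S.filter (· ∈ H) = A} :=
        Nat.card_subtype_and_mem_eq_sum _ _ _
    _ = ∑ A ∈ S.powersetCard (k - 2), (Fintype.card F + k - 1 - S.card) := by
        refine sum_congr rfl fun A hA => ?_
        obtain ⟨hAS, hA⟩ := mem_powersetCard.1 hA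
        simp only [← coe_inj, hfilter]
        exact hS.card_hyperplane_inter_eq hSk hAS (by omega)
    _ = _ := by rw [sum_const, card_powersetCard, smul_eq_mul]
end

section
/- Let S be an arc of F_q^k with |S| ≥ k and t = q+k−1−|S| ≥ 0, let A be a subset of S of size k−2 with a fixed ordering (p_1, …, p_{k−2}), let f_A be a tangent polynomial for A, and let E be a subset of S of size t+k−1 with A ⊆ E. Then for every x ∈ F_q^k, f_A(x) = Σ_{e ∈ E∖A} f_A(e) · ∏_{u ∈ E∖(A∪{e})} d_A(u,x)/d_A(u,e), where each d_A(u,e) is nonzero since S is an arc. -/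
open Finset

variable {F : Type*} [Field F]

/-!
The factors of `f_A` and the forms `d_A(u, ·)` all vanish on `A`, and for distinct
`e₀, e₁ ∈ E ∖ A` the arc property makes `A ∪ {e₀, e₁}` a basis, so each of these forms is a
combination of `d_A(e₀, ·)` and `d_A(e₁, ·)`. On `E ∖ A`, `d_A(u, e) = 0` exactly when `u = e`,
so the formula is homogeneous Lagrange interpolation of the degree-`t` form `f_A` at the `t + 1`
nodes of `E ∖ A`. Induct on `t`: write the first factor of `f_A` as
`c₀ d_A(e₀, ·) + c₁ d_A(e₁, ·)`; multiplying by `d_A(eᵢ, ·)` kills the node `eᵢ`, and turns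
interpolation at the nodes `E ∖ (A ∪ {eᵢ})` into interpolation at the nodes `E ∖ A`.
-/

section HomogeneousLagrange

variable {V : Type*} [AddCommGroup V] [Module F V]

theorem mem_span_pair_of_span_insert_insert_eq_top {Z : Set V} {e₀ e₁ : V}
    (hspan : Submodule.span F (insert e₀ (insert e₁ Z)) = ⊤) {β γ δ : V →ₗ[F] F}
    (hβ : ∀ z ∈ Z, β z = 0) (hγ : ∀ z ∈ Z, γ z = 0) (hδ : ∀ z ∈ Z, δ z = 0)
    (hγ₀ : γ e₀ = 0) (hγ₁ : γ e₁ ≠ 0) (hδ₀ : δ e₀ ≠ 0) (hδ₁ : δ e₁ = 0) :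
    β ∈ Submodule.span F {γ, δ} := by
  refine Submodule.mem_span_pair.2 ⟨β e₁ / γ e₁, β e₀ / δ e₀, LinearMap.ext_on hspan ?_⟩
  rintro z (rfl | rfl | hz)
  · simp [hγ₀, hδ₀]
  · simp [hγ₁, hδ₁]
  · simp [hβ z hz, hγ z hz, hδ z hz]

variable [DecidableEq V]

def lagrangeBasis (D : V → V →ₗ[F] F) (s : Finset V) (e x : V) : F :=
  ∏ u ∈ s.erase e, D u x / D u e

theorem mul_eq_sum_lagrangeBasis {D : V → V →ₗ[F] F} {s : Finset V} {e₀ : V} (he₀ : e₀ ∈ s)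
    (hD : ∀ e ∈ s, D e₀ e = 0 ↔ e₀ = e) {g : V → F}
    (hg : ∀ y, g y = ∑ e ∈ s.erase e₀, g e * lagrangeBasis D (s.erase e₀) e y) (x : V) :
    D e₀ x * g x = ∑ e ∈ s, D e₀ e * g e * lagrangeBasis D s e x := by
  rw [← add_sum_erase s _ he₀, (hD e₀ he₀).2 rfl, zero_mul, zero_mul, zero_add, hg x, mul_sum]
  refine sum_congr rfl fun e he => ?_
  have hne : e₀ ≠ e := (ne_of_mem_erase he).symm
  have hD₀ : D e₀ e ≠ 0 := (hD e (mem_of_mem_erase he)).not.2 hne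
  simp only [lagrangeBasis]
  rw [← mul_prod_erase (s.erase e) (fun u => D u x / D u e) (mem_erase.2 ⟨hne, he₀⟩),
    erase_right_comm]
  field_simp

theorem prod_apply_eq_sum_lagrangeBasis {Z : Set V} {D : V → V →ₗ[F] F} {n : ℕ} {s : Finset V}
    (hs : s.card = n + 1) (hD : ∀ u ∈ s, ∀ e ∈ s, D u e = 0 ↔ u = e)
    (hDZ : ∀ u ∈ s, ∀ z ∈ Z, D u z = 0)
    (hspan : ∀ e₀ ∈ s, ∀ e₁ ∈ s, e₀ ≠ e₁ → Submodule.span F (insert e₀ (insert e₁ Z)) = ⊤)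
    (α : Fin n → V →ₗ[F] F) (hα : ∀ i, ∀ z ∈ Z, α i z = 0) (x : V) :
    ∏ i, α i x = ∑ e ∈ s, (∏ i, α i e) * lagrangeBasis D s e x := by
  induction n generalizing s x with
  | zero =>
    obtain ⟨e, rfl⟩ := card_eq_one.1 hs
    simp [lagrangeBasis]
  | succ n ih =>
    obtain ⟨e₀, he₀, e₁, he₁, hne⟩ := one_lt_card.1 (by omega : 1 < s.card)
    have ih_erase : ∀ e ∈ s, ∀ y, ∏ i : Fin n, α i.succ y =
        ∑ e' ∈ s.erase e, (∏ i : Fin n, α i.succ e') * lagrangeBasis D (s.erase e) e' y :=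
      fun e he => ih (by rw [card_erase_of_mem he, hs]; rfl)
        (fun u hu e' he' => hD u (mem_of_mem_erase hu) e' (mem_of_mem_erase he'))
        (fun u hu => hDZ u (mem_of_mem_erase hu))
        (fun u hu e' he' => hspan u (mem_of_mem_erase hu) e' (mem_of_mem_erase he'))
        (fun i : Fin n => α i.succ) (fun i => hα i.succ)
    obtain ⟨c₀, c₁, hα₀⟩ := Submodule.mem_span_pair.1 <|
      mem_span_pair_of_span_insert_insert_eq_top (hspan e₀ he₀ e₁ he₁ hne) (hα 0)
        (hDZ e₀ he₀) (hDZ e₁ he₁) ((hD e₀ he₀ e₀ he₀).2 rfl) ((hD e₀ he₀ e₁ he₁).not.2 hne)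
        ((hD e₁ he₁ e₀ he₀).not.2 hne.symm) ((hD e₁ he₁ e₁ he₁).2 rfl)
    calc ∏ i, α i x
        = c₀ * (D e₀ x * ∏ i : Fin n, α i.succ x) + c₁ * (D e₁ x * ∏ i : Fin n, α i.succ x) := by
          rw [Fin.prod_univ_succ, ← hα₀]
          simp only [LinearMap.add_apply, LinearMap.smul_apply, smul_eq_mul]
          ring
      _ = ∑ e ∈ s, (∏ i, α i e) * lagrangeBasis D s e x := by
          rw [mul_eq_sum_lagrangeBasis he₀ (hD e₀ he₀) (ih_erase e₀ he₀),
            mul_eq_sum_lagrangeBasis he₁ (hD e₁ he₁) (ih_erase e₁ he₁), mul_sum, mul_sum,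
            ← sum_add_distrib]
          refine sum_congr rfl fun e _ => ?_
          rw [Fin.prod_univ_succ, ← hα₀]
          simp only [LinearMap.add_apply, LinearMap.smul_apply, smul_eq_mul]
          ring

end HomogeneousLagrange

theorem IsArc.linearIndependent {k : ℕ} {S : Set (Fin k → F)} (hS : IsArc S)
    {v : Fin k → Fin k → F} (hv : Function.Injective v) (hvS : Set.range v ⊆ S) :
    LinearIndependent F v := by
  classical
  have hT := hS (univ.image v) (by simpa using hvS) (by rw [card_image_of_injective _ hv, card_fin])
  exact hT.comp (fun i => ⟨v i, mem_image_of_mem v (mem_univ i)⟩)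
    fun i j hij => hv (congrArg Subtype.val hij)

theorem IsArc.linearIndependent_cons_cons {m : ℕ} {S : Set (Fin (m + 2) → F)} (hS : IsArc S)
    {p : Fin m → Fin (m + 2) → F} (hp : Function.Injective p) (hpS : Set.range p ⊆ S)
    {u e : Fin (m + 2) → F} (hu : u ∈ S \ Set.range p) (he : e ∈ S \ Set.range p) (hue : u ≠ e) :
    LinearIndependent F (Fin.cons u (Fin.cons e p) : Fin (m + 2) → Fin (m + 2) → F) := by
  refine hS.linearIndependent (Fin.cons_injective_iff.2 ⟨?_, Fin.cons_injective_iff.2 ⟨he.2, hp⟩⟩)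
    ?_
  · rw [Fin.range_cons]
    rintro (h | h)
    exacts [hue h, hu.2 h]
  · rw [Fin.range_cons, Fin.range_cons]
    exact Set.insert_subset hu.1 (Set.insert_subset he.1 hpS)

section DeterminantForm

variable {m : ℕ} (p : Fin m → Fin (m + 2) → F)

theorem dA_eq_det (u z : Fin (m + 2) → F) :
    dA (k := m + 2) p u z = (Matrix.of (Fin.cons u (Fin.cons z p))).det := by
  rw [dA, dif_pos (show m + 2 - 2 + 1 + 1 = m + 2 from rfl)]
  rfl

noncomputable def dAForm (u : Fin (m + 2) → F) : (Fin (m + 2) → F) →ₗ[F] F :=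
  (Matrix.detRowAlternating : (Fin (m + 2) → F) [⋀^Fin (m + 2)]→ₗ[F] F).toMultilinearMap.toLinearMap
    (Fin.cons u (Fin.cons 0 p)) (Fin.succ 0)

theorem dAForm_apply (u z : Fin (m + 2) → F) : dAForm p u z = dA (k := m + 2) p u z := by
  rw [dA_eq_det, dAForm, MultilinearMap.toLinearMap_apply, ← Fin.cons_update, Fin.update_cons_zero]
  rfl

theorem dAForm_self (u : Fin (m + 2) → F) : dAForm p u u = 0 := by
  rw [dAForm_apply, dA_eq_det]
  exact Matrix.det_zero_of_row_eq (i := 0) (j := Fin.succ 0) (Fin.succ_ne_zero 0).symm rfl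

theorem dAForm_apply_of_mem_range (u : Fin (m + 2) → F) {z : Fin (m + 2) → F}
    (hz : z ∈ Set.range p) : dAForm p u z = 0 := by
  obtain ⟨j, rfl⟩ := hz
  rw [dAForm_apply, dA_eq_det]
  exact Matrix.det_zero_of_row_eq (i := Fin.succ 0) (j := j.succ.succ)
    (Fin.succ_injective _ |>.ne (Fin.succ_ne_zero j).symm) rfl

theorem dAForm_ne_zero {u e : Fin (m + 2) → F}
    (h : LinearIndependent F (Fin.cons u (Fin.cons e p) : Fin (m + 2) → Fin (m + 2) → F)) :
    dAForm p u e ≠ 0 := by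
  rw [dAForm_apply, dA_eq_det]
  exact (Matrix.isUnit_iff_isUnit_det _).1 (Matrix.linearIndependent_rows_iff_isUnit.1 h)
    |>.ne_zero

variable {p}

theorem IsArc.dAForm_eq_zero_iff {S : Set (Fin (m + 2) → F)} (hS : IsArc S)
    (hp : Function.Injective p) (hpS : Set.range p ⊆ S) {u e : Fin (m + 2) → F}
    (hu : u ∈ S \ Set.range p) (he : e ∈ S \ Set.range p) : dAForm p u e = 0 ↔ u = e :=
  ⟨fun h => by_contra fun hue =>
    dAForm_ne_zero p (hS.linearIndependent_cons_cons hp hpS hu he hue) h,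
    fun hue => hue ▸ dAForm_self p u⟩

theorem IsArc.span_insert_insert_range_eq_top {S : Set (Fin (m + 2) → F)} (hS : IsArc S)
    (hp : Function.Injective p) (hpS : Set.range p ⊆ S) {e₀ e₁ : Fin (m + 2) → F}
    (he₀ : e₀ ∈ S \ Set.range p) (he₁ : e₁ ∈ S \ Set.range p) (hne : e₀ ≠ e₁) :
    Submodule.span F (insert e₀ (insert e₁ (Set.range p))) = ⊤ := by
  rw [← Fin.range_cons, ← Fin.range_cons]
  exact (hS.linearIndependent_cons_cons hp hpS he₀ he₁ hne).span_eq_top_of_card_eq_finrank'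
    (by simp)

end DeterminantForm

theorem stmt3_general [DecidableEq F] {k t : ℕ} (hk : 3 ≤ k)
    (S : Finset (Fin k → F)) (hS : IsArc (↑S : Set (Fin k → F)))
    (p : Fin (k - 2) ↪ (Fin k → F)) (hp : ∀ i, p i ∈ S)
    (fA : (Fin k → F) → F) (hfA : IsTangentPoly t (↑S) (Set.range p) fA)
    (E : Finset (Fin k → F)) (hES : E ⊆ S) (hAE : ∀ i, p i ∈ E)
    (hE : E.card = t + k - 1) (x : Fin k → F) :
    fA x = ∑ e ∈ E \ Finset.univ.image p,
      fA e * ∏ u ∈ E \ insert e (Finset.univ.image p),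
        dA (⇑p) u x / dA (⇑p) u e := by
  obtain ⟨m, rfl⟩ : ∃ m, k = m + 2 := ⟨k - 2, by omega⟩
  obtain ⟨α, -, hker, hfA⟩ := hfA
  have hpS : Set.range p ⊆ ↑S := Set.range_subset_iff.2 hp
  have hcard : (E \ univ.image p).card = t + 1 := by
    rw [card_sdiff_of_subset (by simpa [Finset.subset_iff] using hAE),
      card_image_of_injective _ p.injective, hE, card_univ, Fintype.card_fin]
    omega
  have hnode : ∀ u ∈ E \ univ.image p, u ∈ (↑S : Set _) \ Set.range p := fun u hu => by
    simp only [mem_sdiff, mem_image, mem_univ, true_and] at hu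
    exact ⟨hES hu.1, hu.2⟩
  rw [hfA, prod_apply_eq_sum_lagrangeBasis hcard
    (fun u hu e he => hS.dAForm_eq_zero_iff p.injective hpS (hnode u hu) (hnode e he))
    (fun u _ _ => dAForm_apply_of_mem_range _ u)
    (fun e₀ he₀ e₁ he₁ => hS.span_insert_insert_range_eq_top p.injective hpS (hnode e₀ he₀)
      (hnode e₁ he₁))
    α (fun i _ hz => ((hker i).ge hz).2) x]
  refine sum_congr rfl fun e _ => ?_
  simp only [hfA, lagrangeBasis, dAForm_apply, sdiff_insert]

theorem stmt3 [Fintype F] [DecidableEq F] {k t : ℕ} (hk : 3 ≤ k)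
    (S : Finset (Fin k → F)) (hS : IsArc (↑S : Set (Fin k → F))) (hSk : k ≤ S.card)
    (ht : S.card + t = Fintype.card F + k - 1)
    (p : Fin (k - 2) ↪ (Fin k → F)) (hp : ∀ i, p i ∈ S)
    (fA : (Fin k → F) → F) (hfA : IsTangentPoly t (↑S) (Set.range p) fA)
    (E : Finset (Fin k → F)) (hES : E ⊆ S) (hAE : ∀ i, p i ∈ E)
    (hE : E.card = t + k - 1) (x : Fin k → F) :
    fA x = ∑ e ∈ E \ Finset.univ.image p,
      fA e * ∏ u ∈ E \ insert e (Finset.univ.image p),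
        dA (⇑p) u x / dA (⇑p) u e :=
  stmt3_general hk S hS p hp fA hfA E hES hAE hE x
end

section
/- Let S be an arc of F_q^k with |S| ≥ k and t = q+k−1−|S| ≥ 0, let A be a subset of S of size k−2 with a fixed ordering (p_1, …, p_{k−2}), let f_A be a tangent polynomial for A, and let E be a subset of S of size t+k with A ⊆ E. Then Σ_{e ∈ E∖A} f_A(e) · ∏_{u ∈ E∖(A∪{e})} d_A(u,e)^{−1} = 0, where each d_A(u,e) is nonzero since S is an arc. -/
open Finset

variable {F : Type*} [Field F]

/-- 2x2 determinant on pairs. -/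
def dd2 (u v : F × F) : F := u.1 * v.2 - u.2 * v.1

/-- linear form on pairs. -/
def lin2 (c x : F × F) : F := c.1 * x.1 + c.2 * x.2

lemma dd2_antisymm (u v : F × F) : dd2 u v = - dd2 v u := by simp [dd2]; ring

lemma dd2_self (u : F × F) : dd2 u u = 0 := by simp [dd2]; ring

lemma key2 {β : Type*} [DecidableEq β] (v : β → F × F) :
    ∀ (t : ℕ) (ℓ : Fin t → F × F) (T : Finset β), T.card = t + 2 →
    (∀ a ∈ T, ∀ b ∈ T, a ≠ b → dd2 (v a) (v b) ≠ 0) →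
    ∑ e ∈ T, (∏ i, lin2 (ℓ i) (v e)) * ∏ u ∈ T.erase e, (dd2 (v u) (v e))⁻¹ = 0 := by
  intro t
  induction t with
  | zero =>
    intro ℓ T hT hv
    obtain ⟨a, b, hab, rfl⟩ := Finset.card_eq_two.mp hT
    have h1 : ({a, b} : Finset β).erase a = {b} := by
      rw [show ({a, b} : Finset β) = insert a {b} from rfl,
        Finset.erase_insert (by simpa using hab)]
    have h2 : ({a, b} : Finset β).erase b = {a} := by
      rw [Finset.pair_comm, show ({b, a} : Finset β) = insert b {a} from rfl,
        Finset.erase_insert (by simpa using hab.symm)]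
    rw [Finset.sum_pair hab, h1, h2]
    simp only [Finset.prod_singleton, Finset.univ_eq_empty, Finset.prod_empty, one_mul]
    rw [show dd2 (v a) (v b) = - dd2 (v b) (v a) from dd2_antisymm _ _, inv_neg]
    ring
  | succ t ih =>
    intro ℓ T hT hv
    obtain ⟨w0, hw0⟩ := Finset.card_pos.mp (by omega : 0 < T.card)
    obtain ⟨w1, hw1'⟩ := Finset.card_pos.mp
      (by rw [Finset.card_erase_of_mem hw0, hT]; omega : 0 < (T.erase w0).card)
    have hw1 : w1 ∈ T := Finset.mem_of_mem_erase hw1'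
    have hne : w1 ≠ w0 := Finset.ne_of_mem_erase hw1'
    have hD : dd2 (v w0) (v w1) ≠ 0 := hv w0 hw0 w1 hw1 hne.symm
    set g : β → F := fun e => ∏ i : Fin t, lin2 (ℓ i.succ) (v e) with hg
    set P : β → F := fun e => ∏ u ∈ T.erase e, (dd2 (v u) (v e))⁻¹ with hP
    have hcram : ∀ (c x : F × F),
        lin2 c x * dd2 (v w0) (v w1) =
          dd2 x (v w1) * lin2 c (v w0) + dd2 (v w0) x * lin2 c (v w1) := by
      intro c x; simp only [lin2, dd2]; ring
    have hS1 : ∑ e ∈ T, dd2 (v e) (v w1) * (g e * P e) = 0 := by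
      rw [← Finset.add_sum_erase T _ hw1, dd2_self, zero_mul, zero_add]
      have : ∀ e ∈ T.erase w1, dd2 (v e) (v w1) * (g e * P e) =
          -(g e * ∏ u ∈ (T.erase w1).erase e, (dd2 (v u) (v e))⁻¹) := by
        intro e he
        have heT : e ∈ T := Finset.mem_of_mem_erase he
        have hew1 : e ≠ w1 := Finset.ne_of_mem_erase he
        have hnz : dd2 (v w1) (v e) ≠ 0 := hv w1 hw1 e heT (fun h => hew1 h.symm)
        have hPe : P e = (dd2 (v w1) (v e))⁻¹ *
            ∏ u ∈ (T.erase w1).erase e, (dd2 (v u) (v e))⁻¹ := by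
          simp only [hP]
          rw [← Finset.mul_prod_erase (T.erase e) _
            (Finset.mem_erase.mpr ⟨fun h => hew1 h.symm, hw1⟩), Finset.erase_right_comm]
        rw [hPe, show dd2 (v e) (v w1) = - dd2 (v w1) (v e) from dd2_antisymm _ _]
        linear_combination (-(g e * ∏ u ∈ (T.erase w1).erase e, (dd2 (v u) (v e))⁻¹)) *
          mul_inv_cancel₀ hnz
      rw [Finset.sum_congr rfl this, Finset.sum_neg_distrib]
      rw [ih (fun i => ℓ i.succ) (T.erase w1)
        (by rw [Finset.card_erase_of_mem hw1, hT]; omega)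
        (fun a ha b hb hab => hv a (Finset.mem_of_mem_erase ha) b (Finset.mem_of_mem_erase hb) hab),
        neg_zero]
    have hS2 : ∑ e ∈ T, dd2 (v w0) (v e) * (g e * P e) = 0 := by
      rw [← Finset.add_sum_erase T _ hw0, dd2_self, zero_mul, zero_add]
      have : ∀ e ∈ T.erase w0, dd2 (v w0) (v e) * (g e * P e) =
          g e * ∏ u ∈ (T.erase w0).erase e, (dd2 (v u) (v e))⁻¹ := by
        intro e he
        have heT : e ∈ T := Finset.mem_of_mem_erase he
        have hew0 : e ≠ w0 := Finset.ne_of_mem_erase he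
        have hnz : dd2 (v w0) (v e) ≠ 0 := hv w0 hw0 e heT (fun h => hew0 h.symm)
        have hPe : P e = (dd2 (v w0) (v e))⁻¹ *
            ∏ u ∈ (T.erase w0).erase e, (dd2 (v u) (v e))⁻¹ := by
          simp only [hP]
          rw [← Finset.mul_prod_erase (T.erase e) _
            (Finset.mem_erase.mpr ⟨fun h => hew0 h.symm, hw0⟩), Finset.erase_right_comm]
        rw [hPe]
        linear_combination (g e * ∏ u ∈ (T.erase w0).erase e, (dd2 (v u) (v e))⁻¹) *
          mul_inv_cancel₀ hnz
      rw [Finset.sum_congr rfl this]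
      exact ih (fun i => ℓ i.succ) (T.erase w0)
        (by rw [Finset.card_erase_of_mem hw0, hT]; omega)
        (fun a ha b hb hab => hv a (Finset.mem_of_mem_erase ha) b (Finset.mem_of_mem_erase hb) hab)
    have hmul : (∑ e ∈ T, (∏ i, lin2 (ℓ i) (v e)) * ∏ u ∈ T.erase e, (dd2 (v u) (v e))⁻¹)
        * dd2 (v w0) (v w1) = 0 := by
      rw [Finset.sum_mul]
      have : ∀ e ∈ T, ((∏ i, lin2 (ℓ i) (v e)) * ∏ u ∈ T.erase e, (dd2 (v u) (v e))⁻¹)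
          * dd2 (v w0) (v w1) =
          lin2 (ℓ 0) (v w0) * (dd2 (v e) (v w1) * (g e * P e)) +
          lin2 (ℓ 0) (v w1) * (dd2 (v w0) (v e) * (g e * P e)) := by
        intro e _
        rw [Fin.prod_univ_succ]
        have h := hcram (ℓ 0) (v e)
        simp only [hg, hP]
        linear_combination ((∏ i : Fin t, lin2 (ℓ i.succ) (v e)) *
          ∏ u ∈ T.erase e, (dd2 (v u) (v e))⁻¹) * h
      rw [Finset.sum_congr rfl this, Finset.sum_add_distrib, ← Finset.mul_sum, ← Finset.mul_sum,
        hS1, hS2, mul_zero, mul_zero, add_zero]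
    exact (mul_eq_zero.mp hmul).resolve_right hD

private lemma aux_main {F : Type*} [Field F] [DecidableEq F] {n t : ℕ}
    (S : Finset (Fin (n + 2) → F)) (hS : IsArc (↑S : Set (Fin (n + 2) → F)))
    (p : Fin n → Fin (n + 2) → F) (hpinj : Function.Injective p) (hp : ∀ i, p i ∈ S)
    (α : Fin t → ((Fin (n + 2) → F) →ₗ[F] F)) (hker : ∀ i j, α i (p j) = 0)
    (E : Finset (Fin (n + 2) → F)) (hES : E ⊆ S) (hAE : ∀ i, p i ∈ E)
    (hE : E.card = t + (n + 2)) :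
    ∑ e ∈ E \ Finset.univ.image p,
      (∏ i, α i e) *
        ∏ u ∈ E \ insert e (Finset.univ.image p),
          (Matrix.det (Matrix.of (Fin.cons u (Fin.cons e p))))⁻¹ = 0 := by
  classical
  set A := Finset.univ.image p with hA
  have hmemA : ∀ x, x ∈ A ↔ x ∈ Set.range p := by
    intro x; simp [hA, eq_comm]
  have hcardA : A.card = n := by
    rw [hA, Finset.card_image_of_injective _ hpinj, Finset.card_univ, Fintype.card_fin]
  have hAE' : A ⊆ E := by
    intro x hx; rcases Finset.mem_image.mp hx with ⟨i, -, rfl⟩; exact hAE i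
  have hAS : A ⊆ S := fun x hx => hES (hAE' hx)
  have hcardEA : (E \ A).card = t + 2 := by
    rw [Finset.card_sdiff_of_subset hAE', hcardA, hE]; omega
  -- pick two extra points
  obtain ⟨e0, he0⟩ := Finset.card_pos.mp (by omega : 0 < (E \ A).card)
  have he0E : e0 ∈ E := (Finset.mem_sdiff.mp he0).1
  have he0A : e0 ∉ A := (Finset.mem_sdiff.mp he0).2
  obtain ⟨e1, he1⟩ := Finset.card_pos.mp
    (by rw [Finset.card_erase_of_mem he0, hcardEA]; omega : 0 < ((E \ A).erase e0).card)
  have he1ne : e1 ≠ e0 := Finset.ne_of_mem_erase he1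
  have he1' : e1 ∈ E \ A := Finset.mem_of_mem_erase he1
  have he1E : e1 ∈ E := (Finset.mem_sdiff.mp he1').1
  have he1A : e1 ∉ A := (Finset.mem_sdiff.mp he1').2
  -- arc determinants do not vanish
  have hd : ∀ u, u ∈ S → u ∉ A → ∀ w, w ∈ S → w ∉ A → u ≠ w →
      Matrix.det (Matrix.of (Fin.cons u (Fin.cons w p))) ≠ 0 := by
    intro u hu huA w hw hwA huw
    have hur : u ∉ Set.range p := fun h => huA ((hmemA u).mpr h)
    have hwr : w ∉ Set.range p := fun h => hwA ((hmemA w).mpr h)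
    have hinj : Function.Injective (Fin.cons u (Fin.cons w p) : Fin (n + 2) → _) := by
      apply Fin.cons_injective_of_injective
      · rw [Fin.range_cons]
        simp only [Set.mem_insert_iff, not_or]
        exact ⟨huw, hur⟩
      · exact Fin.cons_injective_of_injective hwr hpinj
    set T' : Finset (Fin (n + 2) → F) := insert u (insert w A) with hT'
    have hmm : ∀ i, (Fin.cons u (Fin.cons w p) : Fin (n + 2) → _) i ∈ T' := by
      intro i
      refine Fin.cases ?_ (fun j => ?_) i
      · simp [hT']
      · refine Fin.cases ?_ (fun l => ?_) j
        · simp [hT']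
        · have hpl : p l ∈ A := Finset.mem_image_of_mem p (Finset.mem_univ l)
          simp [hT', Fin.cons_succ, hpl]
    have hsub : (↑T' : Set (Fin (n + 2) → F)) ⊆ ↑S := by
      intro x hx
      simp only [hT', Finset.coe_insert, Set.mem_insert_iff, Finset.mem_coe] at hx
      rcases hx with rfl | rfl | hx
      · exact hu
      · exact hw
      · exact hAS hx
    have h3 : u ∉ insert w A := by
      simp only [Finset.mem_insert, not_or]; exact ⟨huw, huA⟩
    have hcard : T'.card = n + 2 := by
      rw [hT', Finset.card_insert_of_notMem h3, Finset.card_insert_of_notMem hwA, hcardA]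
    have hli := hS T' hsub hcard
    have hind : LinearIndependent F (fun i => Matrix.of (Fin.cons u (Fin.cons w p)) i) := by
      refine hli.comp (fun i => (⟨(Fin.cons u (Fin.cons w p) : Fin (n + 2) → Fin (n + 2) → F) i, hmm i⟩ : {x // x ∈ T'})) ?_
      intro a b hab
      apply hinj
      exact congrArg Subtype.val hab
    intro h0
    exact ((Matrix.isUnit_iff_isUnit_det _).mp
      (Matrix.linearIndependent_rows_iff_isUnit.mp hind)).ne_zero h0
  have hδ : Matrix.det (Matrix.of (Fin.cons e0 (Fin.cons e1 p))) ≠ 0 :=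
    hd e0 (hES he0E) he0A e1 (hES he1E) he1A he1ne.symm
  -- coordinates with respect to the basis (e0, e1, p)
  obtain ⟨c, hc⟩ : ∃ c : (Fin (n + 2) → F) → Fin (n + 2) → F,
      ∀ u, u = ∑ m, c u m • Fin.cons e0 (Fin.cons e1 p) m := by
    set Bm : Matrix (Fin (n + 2)) (Fin (n + 2)) F :=
      Matrix.of (Fin.cons e0 (Fin.cons e1 p)) with hBm
    refine ⟨fun u => Matrix.vecMul u Bm⁻¹, fun u => ?_⟩
    have h1 : Matrix.vecMul (Matrix.vecMul u Bm⁻¹) Bm = u := by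
      rw [Matrix.vecMul_vecMul, Matrix.nonsing_inv_mul Bm (isUnit_iff_ne_zero.mpr hδ),
        Matrix.vecMul_one]
    conv_lhs => rw [← h1]
    funext j
    rw [Finset.sum_apply]
    simp [Matrix.vecMul, dotProduct, hBm]
  have hlinexp : ∀ (L : (Fin (n + 2) → F) →ₗ[F] F) (x),
      L x = ∑ m : Fin (n + 2), c x m * L ((Fin.cons e0 (Fin.cons e1 p) : Fin (n + 2) → Fin (n + 2) → F) m) := by
    intro L x
    conv_lhs => rw [hc x]
    rw [map_sum]
    exact Finset.sum_congr rfl fun m _ => by rw [map_smul, smul_eq_mul]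
  have hB1 : (Fin.cons e0 (Fin.cons e1 p) : Fin (n + 2) → Fin (n + 2) → F) 1 = e1 := by
    rw [← Fin.succ_zero_eq_one, Fin.cons_succ, Fin.cons_zero]
  -- the two slot linear maps
  have hL0 : ∀ v u, Matrix.det (Matrix.of (Fin.cons u (Fin.cons v p))) =
      (Matrix.detRowAlternating.toMultilinearMap.toLinearMap (Fin.cons 0 (Fin.cons v p)) 0) u := by
    intro v u
    rw [MultilinearMap.toLinearMap_apply, Fin.update_cons_zero]
    rfl
  have hL1 : ∀ u v, Matrix.det (Matrix.of (Fin.cons u (Fin.cons v p))) =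
      (Matrix.detRowAlternating.toMultilinearMap.toLinearMap (Fin.cons u (Fin.cons 0 p)) 1) v := by
    intro u v
    rw [MultilinearMap.toLinearMap_apply, ← Fin.succ_zero_eq_one, ← Fin.cons_update,
      Fin.update_cons_zero]
    rfl
  have hself : ∀ x : Fin (n + 2) → F,
      Matrix.det (Matrix.of (Fin.cons x (Fin.cons x p))) = 0 := by
    intro x
    refine AlternatingMap.map_eq_zero_of_eq _ _ (i := 0) (j := 1) ?_
      (Fin.ne_of_val_ne (by simp))
    show (Fin.cons x (Fin.cons x p) : Fin (n + 2) → Fin (n + 2) → F) 0 =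
      (Fin.cons x (Fin.cons x p) : Fin (n + 2) → Fin (n + 2) → F) 1
    rw [Fin.cons_zero, ← Fin.succ_zero_eq_one, Fin.cons_succ, Fin.cons_zero]
  have hvanL : ∀ (j : Fin n) (v : Fin (n + 2) → F),
      Matrix.det (Matrix.of (Fin.cons (p j) (Fin.cons v p))) = 0 := by
    intro j v
    refine AlternatingMap.map_eq_zero_of_eq _ _ (i := 0) (j := j.succ.succ) ?_
      ((Fin.succ_ne_zero j.succ).symm)
    show (Fin.cons (p j) (Fin.cons v p) : Fin (n + 2) → Fin (n + 2) → F) 0 =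
      (Fin.cons (p j) (Fin.cons v p) : Fin (n + 2) → Fin (n + 2) → F) j.succ.succ
    rw [Fin.cons_zero, Fin.cons_succ, Fin.cons_succ]
  have hvanR : ∀ (x : Fin (n + 2) → F) (j : Fin n),
      Matrix.det (Matrix.of (Fin.cons x (Fin.cons (p j) p))) = 0 := by
    intro x j
    refine AlternatingMap.map_eq_zero_of_eq _ _ (i := 1) (j := j.succ.succ) ?_
      (Fin.ne_of_val_ne (by simp [Fin.val_succ]))
    show (Fin.cons x (Fin.cons (p j) p) : Fin (n + 2) → Fin (n + 2) → F) 1 =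
      (Fin.cons x (Fin.cons (p j) p) : Fin (n + 2) → Fin (n + 2) → F) j.succ.succ
    rw [← Fin.succ_zero_eq_one, Fin.cons_succ, Fin.cons_zero, Fin.cons_succ, Fin.cons_succ]
  have hadd0 : ∀ u u' v : Fin (n + 2) → F,
      Matrix.det (Matrix.of (Fin.cons (u + u') (Fin.cons v p))) =
        Matrix.det (Matrix.of (Fin.cons u (Fin.cons v p))) +
          Matrix.det (Matrix.of (Fin.cons u' (Fin.cons v p))) := by
    intro u u' v
    rw [hL0 v (u + u'), map_add, ← hL0 v u, ← hL0 v u']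
  have hadd1 : ∀ u v v' : Fin (n + 2) → F,
      Matrix.det (Matrix.of (Fin.cons u (Fin.cons (v + v') p))) =
        Matrix.det (Matrix.of (Fin.cons u (Fin.cons v p))) +
          Matrix.det (Matrix.of (Fin.cons u (Fin.cons v' p))) := by
    intro u v v'
    rw [hL1 u (v + v'), map_add, ← hL1 u v, ← hL1 u v']
  have hanti : ∀ u v : Fin (n + 2) → F,
      Matrix.det (Matrix.of (Fin.cons v (Fin.cons u p))) =
        - Matrix.det (Matrix.of (Fin.cons u (Fin.cons v p))) := by
    intro u v
    have h := hself (u + v)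
    rw [hadd0 u v (u + v), hadd1 u u v, hadd1 v u v, hself u, hself v] at h
    linear_combination h
  have hexp0 : ∀ u v : Fin (n + 2) → F,
      Matrix.det (Matrix.of (Fin.cons u (Fin.cons v p))) =
        c u 0 * Matrix.det (Matrix.of (Fin.cons e0 (Fin.cons v p))) +
          c u 1 * Matrix.det (Matrix.of (Fin.cons e1 (Fin.cons v p))) := by
    intro u v
    rw [hL0 v u, hlinexp _ u, Fin.sum_univ_succ, Fin.sum_univ_succ]
    simp only [← hL0 v, Fin.cons_succ, Fin.cons_zero, hvanL, mul_zero,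
      Finset.sum_const_zero, add_zero, Fin.succ_zero_eq_one, hB1]
  have hexp1 : ∀ u v : Fin (n + 2) → F,
      Matrix.det (Matrix.of (Fin.cons u (Fin.cons v p))) =
        c v 0 * Matrix.det (Matrix.of (Fin.cons u (Fin.cons e0 p))) +
          c v 1 * Matrix.det (Matrix.of (Fin.cons u (Fin.cons e1 p))) := by
    intro u v
    rw [hL1 u v, hlinexp _ v, Fin.sum_univ_succ, Fin.sum_univ_succ]
    simp only [← hL1 u, Fin.cons_succ, Fin.cons_zero, hvanR, mul_zero,
      Finset.sum_const_zero, add_zero, Fin.succ_zero_eq_one, hB1]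
  have hexp : ∀ u v : Fin (n + 2) → F,
      Matrix.det (Matrix.of (Fin.cons u (Fin.cons v p))) =
        dd2 (c u 0, c u 1) (c v 0, c v 1) *
          Matrix.det (Matrix.of (Fin.cons e0 (Fin.cons e1 p))) := by
    intro u v
    rw [hexp0 u v, hexp1 e0 v, hexp1 e1 v, hself e0, hself e1, hanti e1 e0]
    simp only [dd2]
    ring
  -- the linear forms in coordinates
  have hα : ∀ (i : Fin t) (x : Fin (n + 2) → F),
      α i x = lin2 (α i e0, α i e1) (c x 0, c x 1) := by
    intro i x
    rw [hlinexp (α i) x, Fin.sum_univ_succ, Fin.sum_univ_succ]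
    simp only [Fin.cons_succ, Fin.cons_zero, hker, mul_zero, Finset.sum_const_zero,
      add_zero, Fin.succ_zero_eq_one, hB1, lin2]
    ring
  -- pairwise nonvanishing of the projected determinants
  have hv : ∀ a ∈ E \ A, ∀ b ∈ E \ A, a ≠ b →
      dd2 (c a 0, c a 1) (c b 0, c b 1) ≠ 0 := by
    intro a ha b hb hab h0
    refine hd a (hES (Finset.mem_sdiff.mp ha).1) (Finset.mem_sdiff.mp ha).2
      b (hES (Finset.mem_sdiff.mp hb).1) (Finset.mem_sdiff.mp hb).2 hab ?_
    rw [hexp a b, h0, zero_mul]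
  -- final assembly
  have hfinal : ∀ e ∈ E \ A,
      (∏ i, α i e) * ∏ u ∈ E \ insert e A,
          (Matrix.det (Matrix.of (Fin.cons u (Fin.cons e p))))⁻¹ =
        ((Matrix.det (Matrix.of (Fin.cons e0 (Fin.cons e1 p))))⁻¹) ^ (t + 1) *
          ((∏ i, lin2 (α i e0, α i e1) (c e 0, c e 1)) *
            ∏ u ∈ (E \ A).erase e, (dd2 (c u 0, c u 1) (c e 0, c e 1))⁻¹) := by
    intro e he
    rw [Finset.sdiff_insert]
    have hcardE : ((E \ A).erase e).card = t + 1 := by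
      rw [Finset.card_erase_of_mem he, hcardEA]
      omega
    have hprod : ∏ u ∈ (E \ A).erase e,
        (Matrix.det (Matrix.of (Fin.cons u (Fin.cons e p))))⁻¹ =
        (∏ u ∈ (E \ A).erase e, (dd2 (c u 0, c u 1) (c e 0, c e 1))⁻¹) *
          ((Matrix.det (Matrix.of (Fin.cons e0 (Fin.cons e1 p))))⁻¹) ^ (t + 1) := by
      rw [← hcardE, ← Finset.prod_const, ← Finset.prod_mul_distrib]
      exact Finset.prod_congr rfl fun u hu => by rw [hexp u e, mul_inv]
    rw [hprod, show (∏ i, α i e) = ∏ i, lin2 (α i e0, α i e1) (c e 0, c e 1) from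
      Finset.prod_congr rfl fun i _ => hα i e]
    ring
  calc ∑ e ∈ E \ A, (∏ i, α i e) * ∏ u ∈ E \ insert e A,
          (Matrix.det (Matrix.of (Fin.cons u (Fin.cons e p))))⁻¹
      = ∑ e ∈ E \ A, ((Matrix.det (Matrix.of (Fin.cons e0 (Fin.cons e1 p))))⁻¹) ^ (t + 1) *
          ((∏ i, lin2 (α i e0, α i e1) (c e 0, c e 1)) *
            ∏ u ∈ (E \ A).erase e, (dd2 (c u 0, c u 1) (c e 0, c e 1))⁻¹) :=
        Finset.sum_congr rfl hfinal
    _ = ((Matrix.det (Matrix.of (Fin.cons e0 (Fin.cons e1 p))))⁻¹) ^ (t + 1) *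
          ∑ e ∈ E \ A, (∏ i, lin2 (α i e0, α i e1) (c e 0, c e 1)) *
            ∏ u ∈ (E \ A).erase e, (dd2 (c u 0, c u 1) (c e 0, c e 1))⁻¹ := by
        rw [Finset.mul_sum]
    _ = 0 := mul_eq_zero_of_right _
        (key2 (fun u => (c u 0, c u 1)) t (fun i => (α i e0, α i e1)) (E \ A) hcardEA hv)

theorem stmt4 [Fintype F] [DecidableEq F] {k t : ℕ} (hk : 3 ≤ k)
    (S : Finset (Fin k → F)) (hS : IsArc (↑S : Set (Fin k → F))) (hSk : k ≤ S.card)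
    (ht : S.card + t = Fintype.card F + k - 1)
    (p : Fin (k - 2) ↪ (Fin k → F)) (hp : ∀ i, p i ∈ S)
    (fA : (Fin k → F) → F) (hfA : IsTangentPoly t (↑S) (Set.range p) fA)
    (E : Finset (Fin k → F)) (hES : E ⊆ S) (hAE : ∀ i, p i ∈ E)
    (hE : E.card = t + k) :
    ∑ e ∈ E \ Finset.univ.image p,
      fA e * ∏ u ∈ E \ insert e (Finset.univ.image p), (dA (⇑p) u e)⁻¹ = 0 := by
  obtain ⟨n, rfl⟩ : ∃ n, k = n + 2 := ⟨k - 2, by omega⟩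
  obtain ⟨α, -, hker, hprod⟩ := hfA
  have hker' : ∀ i j, α i (p j) = 0 := by
    intro i j
    have hx : (p j : Fin (n + 2) → F) ∈ Set.range ⇑p := Set.mem_range_self j
    rw [← hker i] at hx
    exact hx.2
  have hE' : E.card = t + (n + 2) := hE
  refine Eq.trans (Finset.sum_congr rfl fun e he => ?_)
    (aux_main S hS ⇑p p.injective hp α hker' E hES hAE hE')
  rw [hprod e]
  refine congrArg (HMul.hMul _) (Finset.prod_congr rfl fun u _ => ?_)
  have h : dA ⇑p u e = Matrix.det (Matrix.of (Fin.cons u (Fin.cons e ⇑p))) := dif_pos rfl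
  exact congrArg Inv.inv h
end

section
/- (Coordinate-free lemma of tangents.) Let S be an arc of F_q^k with |S| ≥ k and t = q+k−1−|S| ≥ 0, let D be a subset of S of size k−3, let x, y, z be three distinct elements of S∖D, and let f_{D∪{x}}, f_{D∪{y}}, f_{D∪{z}} be tangent polynomials for the (k−2)-subsets D∪{x}, D∪{y}, D∪{z} respectively. Then f_{D∪{x}}(y) · f_{D∪{y}}(z) · f_{D∪{z}}(x) = (−1)^{t+1} · f_{D∪{x}}(z) · f_{D∪{y}}(x) · f_{D∪{z}}(y). -/
open Finset

variable {F : Type*} [Field F]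

section TangentAux

variable {F : Type*} [Field F] {k : ℕ}

def rowFun (p : Fin (k-3) → Fin k → F) (u v w : Fin k → F) : Fin k → Fin k → F := fun j =>
  if j.val = 0 then u else if j.val = 1 then v else if j.val = 2 then w
  else if h : j.val - 3 < k - 3 then p ⟨j.val - 3, h⟩ else 0

noncomputable def det3 (p : Fin (k-3) → Fin k → F) (u v w : Fin k → F) : F :=
  (Matrix.of (rowFun p u v w)).det

lemma rowFun_cases (p : Fin (k-3) → Fin k → F) (u v w : Fin k → F) (j : Fin k) :
    (j.val = 0 ∧ rowFun p u v w j = u) ∨ (j.val = 1 ∧ rowFun p u v w j = v) ∨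
    (j.val = 2 ∧ rowFun p u v w j = w) ∨
    ∃ i : Fin (k-3), j.val = i.val + 3 ∧ rowFun p u v w j = p i := by
  unfold rowFun
  by_cases h0 : j.val = 0
  · exact Or.inl ⟨h0, by rw [if_pos h0]⟩
  by_cases h1 : j.val = 1
  · exact Or.inr (Or.inl ⟨h1, by rw [if_neg h0, if_pos h1]⟩)
  by_cases h2 : j.val = 2
  · exact Or.inr (Or.inr (Or.inl ⟨h2, by rw [if_neg h0, if_neg h1, if_pos h2]⟩))
  have hlt : j.val - 3 < k - 3 := by have := j.isLt; omega
  exact Or.inr (Or.inr (Or.inr ⟨⟨j.val - 3, hlt⟩, by show j.val = j.val - 3 + 3; omega,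
    by rw [if_neg h0, if_neg h1, if_neg h2, dif_pos hlt]⟩))

lemma det3_swap01 (hk : 3 ≤ k) (p : Fin (k-3) → Fin k → F) (u v w : Fin k → F) :
    det3 p v u w = - det3 p u v w := by
  have h0 : 0 < k := by omega
  have h1 : 1 < k := by omega
  have hne : (⟨0, h0⟩ : Fin k) ≠ ⟨1, h1⟩ := by simp [Fin.ext_iff]
  have hrow : Matrix.of (rowFun p v u w)
      = (Matrix.of (rowFun p u v w)).submatrix (Equiv.swap ⟨0, h0⟩ ⟨1, h1⟩) id := by
    ext j l
    rcases eq_or_ne j ⟨0, h0⟩ with rfl | hji0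
    · rw [Matrix.submatrix_apply, Equiv.swap_apply_left]
      simp [rowFun]
    rcases eq_or_ne j ⟨1, h1⟩ with rfl | hji1
    · rw [Matrix.submatrix_apply, Equiv.swap_apply_right]
      simp [rowFun]
    · rw [Matrix.submatrix_apply, Equiv.swap_apply_of_ne_of_ne hji0 hji1, id]
      have hj0 : j.val ≠ 0 := fun h => hji0 (Fin.ext h)
      have hj1 : j.val ≠ 1 := fun h => hji1 (Fin.ext h)
      simp [rowFun, if_neg hj0, if_neg hj1]
  unfold det3
  rw [hrow, Matrix.det_permute]
  simp [Equiv.Perm.sign_swap hne]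

lemma det3_swap02 (hk : 3 ≤ k) (p : Fin (k-3) → Fin k → F) (u v w : Fin k → F) :
    det3 p w v u = - det3 p u v w := by
  have h0 : 0 < k := by omega
  have h2 : 2 < k := by omega
  have hne : (⟨0, h0⟩ : Fin k) ≠ ⟨2, h2⟩ := by simp [Fin.ext_iff]
  have hrow : Matrix.of (rowFun p w v u)
      = (Matrix.of (rowFun p u v w)).submatrix (Equiv.swap ⟨0, h0⟩ ⟨2, h2⟩) id := by
    ext j l
    rcases eq_or_ne j ⟨0, h0⟩ with rfl | hji0
    · rw [Matrix.submatrix_apply, Equiv.swap_apply_left]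
      simp [rowFun]
    rcases eq_or_ne j ⟨2, h2⟩ with rfl | hji2
    · rw [Matrix.submatrix_apply, Equiv.swap_apply_right]
      simp [rowFun]
    · rw [Matrix.submatrix_apply, Equiv.swap_apply_of_ne_of_ne hji0 hji2, id]
      have hj0 : j.val ≠ 0 := fun h => hji0 (Fin.ext h)
      have hj2 : j.val ≠ 2 := fun h => hji2 (Fin.ext h)
      simp [rowFun, if_neg hj0, if_neg hj2]
  unfold det3
  rw [hrow, Matrix.det_permute]
  simp [Equiv.Perm.sign_swap hne]

lemma det3_row01 (hk : 3 ≤ k) (p : Fin (k-3) → Fin k → F) (u w : Fin k → F) :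
    det3 p u u w = 0 := by
  have h0 : 0 < k := by omega
  have h1 : 1 < k := by omega
  apply Matrix.det_zero_of_row_eq (i := ⟨0, h0⟩) (j := ⟨1, h1⟩) (by simp [Fin.ext_iff])
  show rowFun p u u w ⟨0, h0⟩ = rowFun p u u w ⟨1, h1⟩
  simp [rowFun]

lemma det3_row02 (hk : 3 ≤ k) (p : Fin (k-3) → Fin k → F) (u v : Fin k → F) :
    det3 p u v u = 0 := by
  have h0 : 0 < k := by omega
  have h2 : 2 < k := by omega
  apply Matrix.det_zero_of_row_eq (i := ⟨0, h0⟩) (j := ⟨2, h2⟩) (by simp [Fin.ext_iff])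
  show rowFun p u v u ⟨0, h0⟩ = rowFun p u v u ⟨2, h2⟩
  simp [rowFun]

lemma det3_rowD (hk : 3 ≤ k) (p : Fin (k-3) → Fin k → F) (i : Fin (k-3)) (v w : Fin k → F) :
    det3 p (p i) v w = 0 := by
  have h0 : 0 < k := by omega
  have h3 : i.val + 3 < k := by have := i.isLt; omega
  apply Matrix.det_zero_of_row_eq (i := ⟨0, h0⟩) (j := ⟨i.val + 3, h3⟩) (by simp [Fin.ext_iff])
  show rowFun p (p i) v w ⟨0, h0⟩ = rowFun p (p i) v w ⟨i.val + 3, h3⟩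
  rcases rowFun_cases p (p i) v w ⟨i.val + 3, h3⟩ with ⟨h,_⟩|⟨h,_⟩|⟨h,_⟩|⟨i',h,e⟩
  · exact absurd (show i.val + 3 = 0 from h) (by omega)
  · exact absurd (show i.val + 3 = 1 from h) (by omega)
  · exact absurd (show i.val + 3 = 2 from h) (by omega)
  · have hii : i' = i := Fin.ext (by have h' : i.val + 3 = i'.val + 3 := h; omega)
    rw [e, hii]
    simp [rowFun]

lemma rowFun_updateRow (h0 : 0 < k) (p : Fin (k-3) → Fin k → F) (v w u : Fin k → F) :
    Matrix.of (rowFun p u v w)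
      = Matrix.updateRow (Matrix.of (rowFun p 0 v w)) ⟨0, h0⟩ u := by
  ext j l
  rw [Matrix.updateRow_apply]
  rcases eq_or_ne j ⟨0, h0⟩ with rfl | hj
  · rw [if_pos rfl]; simp [rowFun]
  · rw [if_neg hj]
    have hj0 : j.val ≠ 0 := fun h => hj (Fin.ext h)
    simp [rowFun, if_neg hj0]

noncomputable def detL (hk : 3 ≤ k) (p : Fin (k-3) → Fin k → F) (v w : Fin k → F) :
    (Fin k → F) →ₗ[F] F where
  toFun u := det3 p u v w
  map_add' a b := by
    show det3 p (a + b) v w = det3 p a v w + det3 p b v w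
    unfold det3
    rw [rowFun_updateRow (by omega) p v w, rowFun_updateRow (by omega) p v w a,
      rowFun_updateRow (by omega) p v w b, Matrix.det_updateRow_add]
  map_smul' c a := by
    show det3 p (c • a) v w = (RingHom.id F) c • det3 p a v w
    unfold det3
    rw [rowFun_updateRow (by omega) p v w, rowFun_updateRow (by omega) p v w a,
      Matrix.det_updateRow_smul]
    rfl

@[simp] lemma detL_apply (hk : 3 ≤ k) (p : Fin (k-3) → Fin k → F) (v w u : Fin k → F) :
    detL hk p v w u = det3 p u v w := rfl



variable {F : Type*} [Field F] [DecidableEq F] {k : ℕ}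
variable {S D : Finset (Fin k → F)} {p : Fin (k-3) → Fin k → F}

lemma arc_rows_li (hk : 3 ≤ k) (hS : IsArc (↑S : Set (Fin k → F))) (hD : D ⊆ S)
    (hDcard : D.card = k - 3) (hp : ∀ i, p i ∈ D) (hpinj : Function.Injective p)
    {u v w : Fin k → F} (hu : u ∈ S) (hv : v ∈ S) (hw : w ∈ S)
    (huD : u ∉ D) (hvD : v ∉ D) (hwD : w ∉ D)
    (huv : u ≠ v) (huw : u ≠ w) (hvw : v ≠ w) :
    LinearIndependent F (rowFun p u v w) := by
  set T : Finset (Fin k → F) := insert u (insert v (insert w D)) with hT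
  have huT : u ∉ insert v (insert w D) := by simp [Finset.mem_insert, huv, huw, huD]
  have hvT : v ∉ insert w D := by simp [Finset.mem_insert, hvw, hvD]
  have hTS : T ⊆ S := by
    rw [hT]
    refine Finset.insert_subset hu (Finset.insert_subset hv (Finset.insert_subset hw hD))
  have hTcard : T.card = k := by
    rw [hT, Finset.card_insert_of_notMem huT, Finset.card_insert_of_notMem hvT,
      Finset.card_insert_of_notMem hwD, hDcard]
    omega
  have hLI := hS T (Finset.coe_subset.mpr hTS) hTcard
  have hmemT : ∀ a, a = u ∨ a = v ∨ a = w ∨ a ∈ D → a ∈ T := by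
    intro a ha
    simp only [hT, Finset.mem_insert]
    tauto
  have hmem : ∀ j, rowFun p u v w j ∈ T := by
    intro j
    rcases rowFun_cases p u v w j with ⟨_,h⟩|⟨_,h⟩|⟨_,h⟩|⟨i,_,h⟩ <;> rw [h]
    · exact hmemT u (Or.inl rfl)
    · exact hmemT v (Or.inr (Or.inl rfl))
    · exact hmemT w (Or.inr (Or.inr (Or.inl rfl)))
    · exact hmemT (p i) (Or.inr (Or.inr (Or.inr (hp i))))
  have hinj : Function.Injective (rowFun p u v w) := by
    intro j j' hjj
    rcases rowFun_cases p u v w j with ⟨e,h⟩|⟨e,h⟩|⟨e,h⟩|⟨i,e,h⟩ <;>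
      rcases rowFun_cases p u v w j' with ⟨e',h'⟩|⟨e',h'⟩|⟨e',h'⟩|⟨i',e',h'⟩ <;>
      rw [h, h'] at hjj <;>
      first
        | exact Fin.ext (by omega)
        | exact absurd hjj huv
        | exact absurd hjj huw
        | exact absurd hjj hvw
        | exact absurd hjj.symm huv
        | exact absurd hjj.symm huw
        | exact absurd hjj.symm hvw
        | exact absurd (show u ∈ D by rw [hjj]; exact hp _) huD
        | exact absurd (show v ∈ D by rw [hjj]; exact hp _) hvD
        | exact absurd (show w ∈ D by rw [hjj]; exact hp _) hwD
        | exact absurd (show u ∈ D by rw [← hjj]; exact hp _) huD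
        | exact absurd (show v ∈ D by rw [← hjj]; exact hp _) hvD
        | exact absurd (show w ∈ D by rw [← hjj]; exact hp _) hwD
        | (obtain rfl := hpinj hjj; exact Fin.ext (by omega))
  exact hLI.comp (fun j => (⟨rowFun p u v w j, hmem j⟩ : {a // a ∈ T}))
    (fun j j' hh => hinj (congrArg Subtype.val hh))

lemma arc_det3_ne_zero (hk : 3 ≤ k) (hS : IsArc (↑S : Set (Fin k → F))) (hD : D ⊆ S)
    (hDcard : D.card = k - 3) (hp : ∀ i, p i ∈ D) (hpinj : Function.Injective p)
    {u v w : Fin k → F} (hu : u ∈ S) (hv : v ∈ S) (hw : w ∈ S)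
    (huD : u ∉ D) (hvD : v ∉ D) (hwD : w ∉ D)
    (huv : u ≠ v) (huw : u ≠ w) (hvw : v ≠ w) :
    det3 p u v w ≠ 0 := by
  have hLI := arc_rows_li hk hS hD hDcard hp hpinj hu hv hw huD hvD hwD huv huw hvw
  have hU : IsUnit (Matrix.of (rowFun p u v w)) :=
    Matrix.linearIndependent_rows_iff_isUnit.mp hLI
  exact ((Matrix.isUnit_iff_isUnit_det _).mp hU).ne_zero

lemma arc_rows_span (hk : 3 ≤ k) (hS : IsArc (↑S : Set (Fin k → F))) (hD : D ⊆ S)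
    (hDcard : D.card = k - 3) (hp : ∀ i, p i ∈ D) (hpinj : Function.Injective p)
    {u v w : Fin k → F} (hu : u ∈ S) (hv : v ∈ S) (hw : w ∈ S)
    (huD : u ∉ D) (hvD : v ∉ D) (hwD : w ∉ D)
    (huv : u ≠ v) (huw : u ≠ w) (hvw : v ≠ w) :
    Submodule.span F (Set.range (rowFun p u v w)) = ⊤ := by
  haveI : Nonempty (Fin k) := ⟨⟨0, by omega⟩⟩
  exact (arc_rows_li hk hS hD hDcard hp hpinj hu hv hw huD hvD hwD huv huw hvw).span_eq_top_of_card_eq_finrank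
    (by simp)


lemma prop_of_slope (hk : 3 ≤ k) (hS : IsArc (↑S : Set (Fin k → F))) (hD : D ⊆ S)
    (hDcard : D.card = k - 3) (hp : ∀ i, p i ∈ D) (hpinj : Function.Injective p)
    {x y z : Fin k → F} (hx : x ∈ S) (hy : y ∈ S) (hz : z ∈ S)
    (hxD : x ∉ D) (hyD : y ∉ D) (hzD : z ∉ D)
    (hxy : x ≠ y) (hxz : x ≠ z) (hyz : y ≠ z)
    (φ ψ : (Fin k → F) →ₗ[F] F)
    (hφp : ∀ i, φ (p i) = 0) (hφx : φ x = 0)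
    (hψp : ∀ i, ψ (p i) = 0) (hψx : ψ x = 0)
    (hφz : φ z ≠ 0) (hs : φ y * ψ z = ψ y * φ z) :
    ψ = (ψ z / φ z) • φ := by
  apply LinearMap.ext_on
    (arc_rows_span hk hS hD hDcard hp hpinj hx hy hz hxD hyD hzD hxy hxz hyz)
  rintro a ⟨j, rfl⟩
  rcases rowFun_cases p x y z j with ⟨_,h⟩|⟨_,h⟩|⟨_,h⟩|⟨i,_,h⟩ <;> rw [h] <;>
    simp only [LinearMap.smul_apply, smul_eq_mul, hψx, hφx, hψp, hφp, mul_zero]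
  · rw [div_mul_eq_mul_div, eq_div_iff hφz]
    linear_combination -hs
  · rw [div_mul_cancel₀ _ hφz]

lemma cross_div {A B C D' : F} (hB : B ≠ 0) (hD' : D' ≠ 0) (h : A * B⁻¹ = C * D'⁻¹) :
    A * D' = C * B := by
  field_simp at h
  first
    | linear_combination h
    | linear_combination -h

lemma tangent_rel [Fintype F] (hk : 3 ≤ k)
    (hS : IsArc (↑S : Set (Fin k → F))) (hSk : k ≤ S.card) {t : ℕ}
    (ht : S.card + t = Fintype.card F + k - 1)
    (hD : D ⊆ S) (hDcard : D.card = k - 3)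
    (hp : ∀ i, p i ∈ D) (hpinj : Function.Injective p)
    {x y z : Fin k → F} (hx : x ∈ S) (hy : y ∈ S) (hz : z ∈ S)
    (hxD : x ∉ D) (hyD : y ∉ D) (hzD : z ∉ D)
    (hxy : x ≠ y) (hxz : x ≠ z) (hyz : y ≠ z)
    {fx : (Fin k → F) → F}
    (hfx : IsTangentPoly t (↑S : Set (Fin k → F)) (↑(insert x D) : Set (Fin k → F)) fx)
    {S' : Finset (Fin k → F)} (hS' : S' = S \ insert x (insert y (insert z D))) :
    fx y * (∏ s ∈ S', det3 p y s x) = -(fx z * ∏ s ∈ S', det3 p z s x) := by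
  classical
  obtain ⟨α, hαind, hαker, hαprod⟩ := hfx
  have hαzero : ∀ i a, a = x ∨ a ∈ D → α i a = 0 := by
    intro i a ha
    have haS : a ∈ S := by rcases ha with rfl | h; exact hx; exact hD h
    have : a ∈ (↑S : Set (Fin k → F)) ∩ {v | α i v = 0} := by
      rw [hαker i]
      simpa [Finset.mem_coe, Finset.mem_insert] using ha
    exact this.2
  have hαne : ∀ i a, a ∈ S → a ≠ x → a ∉ D → α i a ≠ 0 := by
    intro i a haS hax haD h0
    have : a ∈ (↑S : Set (Fin k → F)) ∩ {v | α i v = 0} :=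
      ⟨Finset.mem_coe.mpr haS, h0⟩
    rw [hαker i] at this
    rcases Finset.mem_insert.mp (Finset.mem_coe.mp this) with rfl | hmem
    · exact hax rfl
    · exact haD hmem
  have hαy : ∀ i, α i y ≠ 0 := fun i => hαne i y hy (Ne.symm hxy) hyD
  have hαz : ∀ i, α i z ≠ 0 := fun i => hαne i z hz (Ne.symm hxz) hzD
  have hS'mem : ∀ s ∈ S', s ∈ S ∧ s ≠ x ∧ s ≠ y ∧ s ≠ z ∧ s ∉ D := by
    intro s hs
    rw [hS', Finset.mem_sdiff] at hs
    simp only [Finset.mem_insert, not_or] at hs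
    tauto
  have hdyx : ∀ s ∈ S', det3 p y s x ≠ 0 := by
    intro s hs
    obtain ⟨h1, h2, h3, h4, h5⟩ := hS'mem s hs
    exact arc_det3_ne_zero hk hS hD hDcard hp hpinj hy h1 hx hyD h5 hxD
      (Ne.symm h3) (Ne.symm hxy) h2
  have hdzx : ∀ s ∈ S', det3 p z s x ≠ 0 := by
    intro s hs
    obtain ⟨h1, h2, h3, h4, h5⟩ := hS'mem s hs
    exact arc_det3_ne_zero hk hS hD hDcard hp hpinj hz h1 hx hzD h5 hxD
      (Ne.symm h4) (Ne.symm hxz) h2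
  set sl : (Fin t ⊕ {s : Fin k → F // s ∈ S'}) → Fˣ := Sum.elim
    (fun i => Units.mk0 (α i y * (α i z)⁻¹)
      (mul_ne_zero (hαy i) (inv_ne_zero (hαz i))))
    (fun s => Units.mk0 (det3 p y s.1 x * (det3 p z s.1 x)⁻¹)
      (mul_ne_zero (hdyx s.1 s.2) (inv_ne_zero (hdzx s.1 s.2)))) with hsl
  have hφp : ∀ i m, α i (p m) = 0 := fun i m => hαzero i (p m) (Or.inr (hp m))
  have hφx : ∀ i, α i x = 0 := fun i => hαzero i x (Or.inl rfl)
  have hψp : ∀ (s : Fin k → F) m, detL hk p s x (p m) = 0 := by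
    intro s m; rw [detL_apply]; exact det3_rowD hk p m s x
  have hψx : ∀ s : Fin k → F, detL hk p s x x = 0 := by
    intro s; rw [detL_apply]; exact det3_row02 hk p x s
  have hinj : Function.Injective sl := by
    rintro (i | s) (j | s') hab <;>
      have hval := congrArg Units.val hab <;>
      simp only [hsl, Sum.elim_inl, Sum.elim_inr, Units.val_mk0] at hval
    · -- tangent-tangent
      suffices hij : i = j by rw [hij]
      by_contra hne
      have hslope : α i y * α j z = α j y * α i z :=
        cross_div (hαz i) (hαz j) hval
      have hprop := prop_of_slope hk hS hD hDcard hp hpinj hx hy hz hxD hyD hzD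
        hxy hxz hyz (α i) (α j) (hφp i) (hφx i) (hφp j) (hφx j) (hαz i) hslope
      have hLI := hαind j i (fun e => hne e.symm)
      have h2 := (linearIndependent_fin2.mp hLI).2 (α j z / α i z)
      simp only [Matrix.cons_val_one, Matrix.head_cons, Matrix.cons_val_zero] at h2
      exact h2 hprop.symm
    · -- tangent-secant
      exfalso
      obtain ⟨h1, h2, h3, h4, h5⟩ := hS'mem s'.1 s'.2
      have hslope : α i y * det3 p z s'.1 x = det3 p y s'.1 x * α i z :=
        cross_div (hαz i) (hdzx s'.1 s'.2) hval
      have hslope' : α i y * detL hk p s'.1 x z = detL hk p s'.1 x y * α i z := by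
        rw [detL_apply, detL_apply]; exact hslope
      have hprop := prop_of_slope hk hS hD hDcard hp hpinj hx hy hz hxD hyD hzD
        hxy hxz hyz (α i) (detL hk p s'.1 x) (hφp i) (hφx i) (hψp s'.1) (hψx s'.1)
        (hαz i) hslope'
      have heval := LinearMap.congr_fun hprop s'.1
      simp only [LinearMap.smul_apply, smul_eq_mul, detL_apply] at heval
      rw [det3_row01 hk] at heval
      exact (mul_ne_zero (div_ne_zero (hdzx s'.1 s'.2) (hαz i))
        (hαne i s'.1 h1 h2 h5)) heval.symm
    · -- secant-tangent
      exfalso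
      obtain ⟨h1, h2, h3, h4, h5⟩ := hS'mem s.1 s.2
      have hslope0 : det3 p y s.1 x * α j z = α j y * det3 p z s.1 x :=
        cross_div (hdzx s.1 s.2) (hαz j) hval
      have hslope' : α j y * detL hk p s.1 x z = detL hk p s.1 x y * α j z := by
        rw [detL_apply, detL_apply]; exact hslope0.symm
      have hprop := prop_of_slope hk hS hD hDcard hp hpinj hx hy hz hxD hyD hzD
        hxy hxz hyz (α j) (detL hk p s.1 x) (hφp j) (hφx j) (hψp s.1) (hψx s.1)
        (hαz j) hslope'
      have heval := LinearMap.congr_fun hprop s.1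
      simp only [LinearMap.smul_apply, smul_eq_mul, detL_apply] at heval
      rw [det3_row01 hk] at heval
      exact (mul_ne_zero (div_ne_zero (hdzx s.1 s.2) (hαz j))
        (hαne j s.1 h1 h2 h5)) heval.symm
    · -- secant-secant
      suffices hss : s = s' by rw [hss]
      by_contra hne
      have hne' : s.1 ≠ s'.1 := fun e => hne (Subtype.ext e)
      obtain ⟨h1, h2, h3, h4, h5⟩ := hS'mem s.1 s.2
      obtain ⟨h1', h2', h3', h4', h5'⟩ := hS'mem s'.1 s'.2
      have hslope : det3 p y s.1 x * det3 p z s'.1 x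
          = det3 p y s'.1 x * det3 p z s.1 x :=
        cross_div (hdzx s.1 s.2) (hdzx s'.1 s'.2) hval
      have hslope' : detL hk p s.1 x y * detL hk p s'.1 x z
          = detL hk p s'.1 x y * detL hk p s.1 x z := by
        simp only [detL_apply]; exact hslope
      have hprop := prop_of_slope hk hS hD hDcard hp hpinj hx hy hz hxD hyD hzD
        hxy hxz hyz (detL hk p s.1 x) (detL hk p s'.1 x) (hψp s.1) (hψx s.1)
        (hψp s'.1) (hψx s'.1) (by rw [detL_apply]; exact hdzx s.1 s.2) hslope'
      have heval := LinearMap.congr_fun hprop s'.1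
      simp only [LinearMap.smul_apply, smul_eq_mul, detL_apply] at heval
      rw [det3_row01 hk] at heval
      have hds : det3 p s'.1 s.1 x ≠ 0 :=
        arc_det3_ne_zero hk hS hD hDcard hp hpinj h1' h1 hx h5' h5 hxD
          (Ne.symm hne') h2' h2
      exact (mul_ne_zero (div_ne_zero (hdzx s'.1 s'.2)
        (by rw [detL_apply] at *; exact hdzx s.1 s.2)) hds) heval.symm
  have hT0 : insert x (insert y (insert z D)) ⊆ S :=
    Finset.insert_subset hx (Finset.insert_subset hy (Finset.insert_subset hz hD))
  have hT0card : (insert x (insert y (insert z D))).card = k := by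
    rw [Finset.card_insert_of_notMem (by simp [Finset.mem_insert, hxy, hxz, hxD]),
      Finset.card_insert_of_notMem (by simp [Finset.mem_insert, hyz, hyD]),
      Finset.card_insert_of_notMem hzD, hDcard]
    omega
  have hS'card : S'.card = S.card - k := by
    rw [hS', Finset.card_sdiff_of_subset hT0, hT0card]
  have hpos : 0 < Fintype.card F := Fintype.card_pos
  have hcard : Fintype.card (Fin t ⊕ {s : Fin k → F // s ∈ S'}) = Fintype.card Fˣ := by
    rw [Fintype.card_sum, Fintype.card_fin, Fintype.card_coe, Fintype.card_units, hS'card]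
    omega
  have hbij : Function.Bijective sl :=
    (Fintype.bijective_iff_injective_and_card sl).mpr ⟨hinj, hcard⟩
  have hprodu : (∏ i, sl i) = (-1 : Fˣ) := by
    rw [show (∏ i, sl i) = ∏ u : Fˣ, u from hbij.prod_comp id]
    exact FiniteField.prod_univ_units_id_eq_neg_one
  have hvalprod : (∏ i, ((sl i : Fˣ) : F)) = -1 := by
    have := congrArg (Units.coeHom F) hprodu
    rw [map_prod] at this
    simpa using this
  rw [Fintype.prod_sum_type] at hvalprod
  simp only [hsl, Sum.elim_inl, Sum.elim_inr, Units.val_mk0] at hvalprod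
  rw [Finset.prod_mul_distrib, Finset.prod_inv_distrib,
    Finset.prod_mul_distrib, Finset.prod_inv_distrib] at hvalprod
  have e1 : (∏ s : {s // s ∈ S'}, det3 p y s.1 x) = ∏ s ∈ S', det3 p y s x :=
    (Finset.prod_subtype (p := fun a => a ∈ S') S' (fun _ => Iff.rfl)
      (fun a => det3 p y a x)).symm
  have e2 : (∏ s : {s // s ∈ S'}, det3 p z s.1 x) = ∏ s ∈ S', det3 p z s x :=
    (Finset.prod_subtype (p := fun a => a ∈ S') S' (fun _ => Iff.rfl)
      (fun a => det3 p z a x)).symm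
  rw [e1, e2, ← hαprod y, ← hαprod z] at hvalprod
  have hfxz : fx z ≠ 0 := by
    rw [hαprod]
    exact Finset.prod_ne_zero_iff.mpr (fun i _ => hαz i)
  have hPz : (∏ s ∈ S', det3 p z s x) ≠ 0 :=
    Finset.prod_ne_zero_iff.mpr (fun s hs => hdzx s hs)
  field_simp at hvalprod
  first
    | linear_combination hvalprod
    | linear_combination -hvalprod

lemma neg_one_pow_card (K : Type*) [Field K] [Fintype K] :
    (-1 : K) ^ (Fintype.card K) = -1 := by
  rcases Nat.even_or_odd (Fintype.card K) with he | ho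
  · have h2 : ringChar K = 2 := FiniteField.even_card_iff_char_two.mpr (Nat.even_iff.mp he)
    haveI : CharP K 2 := by rw [← h2]; exact ringChar.charP K
    have hneg : (-1 : K) = 1 := by
      have := CharTwo.neg_eq (R := K) 1
      simpa using this
    rw [hneg, one_pow]
  · exact Odd.neg_one_pow ho

end TangentAux

theorem stmt5 [Fintype F] [DecidableEq F] {k t : ℕ} (hk : 3 ≤ k)
    (S : Finset (Fin k → F)) (hS : IsArc (↑S : Set (Fin k → F))) (hSk : k ≤ S.card)
    (ht : S.card + t = Fintype.card F + k - 1)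
    (D : Finset (Fin k → F)) (hD : D ⊆ S) (hDcard : D.card = k - 3)
    (x y z : Fin k → F) (hx : x ∈ S) (hy : y ∈ S) (hz : z ∈ S)
    (hxD : x ∉ D) (hyD : y ∉ D) (hzD : z ∉ D)
    (hxy : x ≠ y) (hxz : x ≠ z) (hyz : y ≠ z)
    (fx fy fz : (Fin k → F) → F)
    (hfx : IsTangentPoly t (↑S) (↑(insert x D)) fx)
    (hfy : IsTangentPoly t (↑S) (↑(insert y D)) fy)
    (hfz : IsTangentPoly t (↑S) (↑(insert z D)) fz) :
    fx y * fy z * fz x = (-1 : F) ^ (t + 1) * (fx z * fy x * fz y) := by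
  classical
  set p : Fin (k-3) → Fin k → F :=
    fun i => (D.equivFin.symm (Fin.cast hDcard.symm i)).1 with hpdef
  have hp : ∀ i, p i ∈ D := fun i => (D.equivFin.symm (Fin.cast hDcard.symm i)).2
  have hpinj : Function.Injective p := by
    intro i j hij
    have h2 := D.equivFin.symm.injective (Subtype.ext hij)
    exact Fin.ext (by simpa using congrArg Fin.val h2)
  set S' := S \ insert x (insert y (insert z D)) with hS'def
  have hS'y : S' = S \ insert y (insert z (insert x D)) := by
    rw [hS'def]
    congr 1
    ext a
    simp only [Finset.mem_insert]
    tauto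
  have hS'z : S' = S \ insert z (insert x (insert y D)) := by
    rw [hS'def]
    congr 1
    ext a
    simp only [Finset.mem_insert]
    tauto
  have rel1 := tangent_rel (p := p) hk hS hSk ht hD hDcard hp hpinj hx hy hz
    hxD hyD hzD hxy hxz hyz hfx hS'def
  have rel2 := tangent_rel (p := p) hk hS hSk ht hD hDcard hp hpinj hy hz hx
    hyD hzD hxD hyz (Ne.symm hxy) (Ne.symm hxz) hfy hS'y
  have rel3 := tangent_rel (p := p) hk hS hSk ht hD hDcard hp hpinj hz hx hy
    hzD hxD hyD (Ne.symm hxz) (Ne.symm hyz) hxy hfz hS'z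
  set N := S'.card with hN
  have hsw : ∀ u w : Fin k → F,
      (∏ s ∈ S', det3 p u s w) = (-1 : F)^N * ∏ s ∈ S', det3 p w s u := by
    intro u w
    calc (∏ s ∈ S', det3 p u s w) = ∏ s ∈ S', (-1) * det3 p w s u :=
          Finset.prod_congr rfl (fun s _ => by rw [det3_swap02 hk p w s u]; ring)
      _ = (-1 : F)^N * ∏ s ∈ S', det3 p w s u := by
          rw [Finset.prod_mul_distrib, Finset.prod_const, hN]
  set Q1 := ∏ s ∈ S', det3 p x s y with hQ1def
  set Q2 := ∏ s ∈ S', det3 p y s z with hQ2def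
  set Q3 := ∏ s ∈ S', det3 p z s x with hQ3def
  have hS'mem : ∀ s ∈ S', s ∈ S ∧ s ≠ x ∧ s ≠ y ∧ s ≠ z ∧ s ∉ D := by
    intro s hs
    rw [hS'def, Finset.mem_sdiff] at hs
    simp only [Finset.mem_insert, not_or] at hs
    tauto
  have hQ1 : Q1 ≠ 0 := by
    rw [hQ1def]
    refine Finset.prod_ne_zero_iff.mpr (fun s hs => ?_)
    obtain ⟨h1, h2, h3, h4, h5⟩ := hS'mem s hs
    exact arc_det3_ne_zero hk hS hD hDcard hp hpinj hx h1 hy hxD h5 hyD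
      (Ne.symm h2) hxy h3
  have hQ2 : Q2 ≠ 0 := by
    rw [hQ2def]
    refine Finset.prod_ne_zero_iff.mpr (fun s hs => ?_)
    obtain ⟨h1, h2, h3, h4, h5⟩ := hS'mem s hs
    exact arc_det3_ne_zero hk hS hD hDcard hp hpinj hy h1 hz hyD h5 hzD
      (Ne.symm h3) hyz h4
  have hQ3 : Q3 ≠ 0 := by
    rw [hQ3def]
    refine Finset.prod_ne_zero_iff.mpr (fun s hs => ?_)
    obtain ⟨h1, h2, h3, h4, h5⟩ := hS'mem s hs
    exact arc_det3_ne_zero hk hS hD hDcard hp hpinj hz h1 hx hzD h5 hxD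
      (Ne.symm h4) (Ne.symm hxz) h2
  have rel1' : fx y * ((-1 : F)^N * Q1) = -(fx z * Q3) := by
    rw [hQ1def, ← hsw y x]
    exact rel1
  have rel2' : fy z * ((-1 : F)^N * Q2) = -(fy x * Q1) := by
    rw [hQ2def, ← hsw z y]
    exact rel2
  have rel3' : fz x * ((-1 : F)^N * Q3) = -(fz y * Q2) := by
    rw [hQ3def, ← hsw x z]
    exact rel3
  have mul3 : (fx y * ((-1 : F)^N * Q1)) * ((fy z * ((-1 : F)^N * Q2)) * (fz x * ((-1 : F)^N * Q3)))
      = (-(fx z * Q3)) * ((-(fy x * Q1)) * (-(fz y * Q2))) := by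
    rw [rel1', rel2', rel3']
  have key : (fx y * fy z * fz x * ((-1 : F)^N * ((-1 : F)^N * (-1 : F)^N))) * (Q1 * (Q2 * Q3))
      = (-(fx z * fy x * fz y)) * (Q1 * (Q2 * Q3)) := by
    linear_combination mul3
  have key2 := mul_right_cancel₀ (mul_ne_zero hQ1 (mul_ne_zero hQ2 hQ3)) key
  have hsq : ∀ n : ℕ, (-1 : F)^n * (-1 : F)^n = 1 := fun n => by
    rw [← pow_add]
    exact Even.neg_one_pow ⟨n, rfl⟩
  have hc : ((-1 : F)^N * ((-1 : F)^N * (-1 : F)^N)) = (-1 : F)^N := by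
    rw [← mul_assoc, hsq N, one_mul]
  rw [hc] at key2
  -- parity of N
  have hT0 : insert x (insert y (insert z D)) ⊆ S :=
    Finset.insert_subset hx (Finset.insert_subset hy (Finset.insert_subset hz hD))
  have hT0card : (insert x (insert y (insert z D))).card = k := by
    rw [Finset.card_insert_of_notMem (by simp [Finset.mem_insert, hxy, hxz, hxD]),
      Finset.card_insert_of_notMem (by simp [Finset.mem_insert, hyz, hyD]),
      Finset.card_insert_of_notMem hzD, hDcard]
    omega
  have hS'card : N = S.card - k := by
    rw [hN, hS'def, Finset.card_sdiff_of_subset hT0, hT0card]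
  have hpos : 0 < Fintype.card F := Fintype.card_pos
  have hqsum : N + t = Fintype.card F - 1 := by omega
  have hpow1 : (-1 : F)^(N + t) = 1 := by
    have hcardpow : (-1 : F)^(Fintype.card F) = -1 := neg_one_pow_card F
    have h1 : (Fintype.card F - 1) + 1 = Fintype.card F := by omega
    rw [← h1, pow_succ] at hcardpow
    rw [hqsum]
    have h2 : (-1 : F)^(Fintype.card F - 1) * (-1) = 1 * (-1) := by
      rw [hcardpow]; ring
    exact mul_right_cancel₀ (neg_ne_zero.mpr one_ne_zero) h2
  have hNt : (-1 : F)^N = (-1 : F)^t := by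
    calc (-1 : F)^N = (-1 : F)^N * ((-1 : F)^t * (-1 : F)^t) := by rw [hsq, mul_one]
      _ = ((-1 : F)^(N + t)) * (-1 : F)^t := by rw [pow_add]; ring
      _ = (-1 : F)^t := by rw [hpow1, one_mul]
  rw [hNt] at key2
  calc fx y * fy z * fz x
      = (fx y * fy z * fz x * (-1 : F)^t) * (-1 : F)^t := by
        rw [mul_assoc (fx y * fy z * fz x), hsq, mul_one]
    _ = -(fx z * fy x * fz y) * (-1 : F)^t := by rw [key2]
    _ = (-1 : F)^(t + 1) * (fx z * fy x * fz y) := by rw [pow_succ]; ring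
end

section
/- Let S be an arc of F_q^k with |S| ≥ k and a fixed linear order, and let t = q+k−1−|S| ≥ 0. Then there exist nonzero scalars α_C ∈ F_q, one for each subset C of S of size k−1, such that for every subset E of S of size k+t and every subset A of E of size k−2, Σ_C α_C · ∏_{u ∈ E∖C} det(u, C)^{−1} = 0, where the sum runs over the subsets C of E of size k−1 containing A (each det(u,C) is nonzero since S is an arc). -/
open Finset

variable {F : Type*} [Field F]

/-!
Take `α_C = ∏_{s ∉ C} det(s, C)⁻¹`, fix `A` and write `C = A ∪ {e}`. Projecting from `A` sends the
points `s ∉ A` of the arc to pairwise independent vectors `P s ∈ F²`, and by the Plücker relation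
`det(u, A ∪ {e}) = ±d⁻¹ det₂(P e, P u)` with `d ≠ 0` independent of `e` and `u`. Each term of the
sum has `q + 1` such factors, so the signs drop out and the claim becomes the case `k = 2`.
There, Segre's lemma of tangents (`∏_{y ≠ x} det₂(x, y) = 1` over the normalised points of the
projective line, which is Wilson's theorem) shows that `∏_{s ∉ C} det₂(P e, P s)⁻¹` is, up to a
constant, the value at `P e` of the binary form of degree `t` vanishing at the `t` points of the
line missed by the arc. The sum over the `t + 2` points of `E \ A` is then a divided difference of
order `t + 1` of a form of degree `t`, hence zero.
-/

section Det2

def det2 (x y : F × F) : F := x.1 * y.2 - x.2 * y.1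

lemma det2_self (x : F × F) : det2 x x = 0 := by
  unfold det2; ring

lemma det2_swap (x y : F × F) : det2 y x = -det2 x y := by
  unfold det2; ring

lemma det2_smul_left (a : F) (x y : F × F) : det2 (a • x) y = a * det2 x y := by
  simp only [det2, Prod.smul_fst, Prod.smul_snd, smul_eq_mul]; ring

lemma det2_smul_right (a : F) (x y : F × F) : det2 x (a • y) = a * det2 x y := by
  simp only [det2, Prod.smul_fst, Prod.smul_snd, smul_eq_mul]; ring

lemma det2_smul_smul (a b : F) (x y : F × F) : det2 (a • x) (b • y) = a * b * det2 x y := by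
  rw [det2_smul_left, det2_smul_right, mul_assoc]

lemma det2_mul_det2 (x w a b : F × F) :
    det2 x w * det2 a b = det2 x a * det2 w b - det2 x b * det2 w a := by
  unfold det2; ring

variable {ι : Type*} [DecidableEq ι] (P : ι → F × F)

lemma sum_det2_mul_prod_inv_erase {Y : Finset ι}
    (hP : (Y : Set ι).Pairwise fun a b => det2 (P a) (P b) ≠ 0) {a : ι} (ha : a ∈ Y) (h : ι → F) :
    ∑ e ∈ Y, det2 (P e) (P a) * h e * ∏ u ∈ Y.erase e, (det2 (P e) (P u))⁻¹ =
      ∑ e ∈ Y.erase a, h e * ∏ u ∈ (Y.erase a).erase e, (det2 (P e) (P u))⁻¹ := by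
  rw [← add_sum_erase _ _ ha, det2_self, zero_mul, zero_mul, zero_add]
  refine sum_congr rfl fun e he => ?_
  have hea : e ≠ a := ne_of_mem_erase he
  rw [← mul_prod_erase (Y.erase e) _ (mem_erase.2 ⟨hea.symm, ha⟩), erase_right_comm]
  have hd : det2 (P e) (P a) ≠ 0 := hP (mem_of_mem_erase he) ha hea
  field_simp

/-- Lagrange interpolation on the projective line: a divided difference of order
`card ws + 1` of the binary form `∏ w ∈ ws, det2 · w` vanishes. -/
theorem sum_prod_det2_mul_prod_inv_eq_zero (ws : Multiset (F × F)) {Y : Finset ι}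
    (hP : (Y : Set ι).Pairwise fun a b => det2 (P a) (P b) ≠ 0)
    (hY : Y.card = Multiset.card ws + 2) :
    ∑ e ∈ Y, (ws.map (det2 (P e))).prod * ∏ u ∈ Y.erase e, (det2 (P e) (P u))⁻¹ = 0 := by
  induction ws using Multiset.induction_on generalizing Y with
  | empty =>
    obtain ⟨a, b, hab, rfl⟩ := card_eq_two.1 hY
    rw [sum_pair hab, erase_insert (by simpa using hab), erase_insert_of_ne hab, erase_singleton,
      insert_empty, prod_singleton, prod_singleton, det2_swap (P a), inv_neg]
    simp
  | cons w ws ih =>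
    obtain ⟨a, ha, b, hb, hab⟩ := one_lt_card.1 (by rw [hY]; simp : 1 < Y.card)
    have hd : det2 (P a) (P b) ≠ 0 := hP ha hb hab
    have hsplit : ∀ e, (Multiset.map (det2 (P e)) (w ::ₘ ws)).prod *
          ∏ u ∈ Y.erase e, (det2 (P e) (P u))⁻¹ =
        det2 w (P b) / det2 (P a) (P b) * (det2 (P e) (P a) * (ws.map (det2 (P e))).prod *
          ∏ u ∈ Y.erase e, (det2 (P e) (P u))⁻¹) -
        det2 w (P a) / det2 (P a) (P b) * (det2 (P e) (P b) * (ws.map (det2 (P e))).prod *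
          ∏ u ∈ Y.erase e, (det2 (P e) (P u))⁻¹) := by
      intro e
      have hw : det2 (P e) w = det2 w (P b) / det2 (P a) (P b) * det2 (P e) (P a) -
          det2 w (P a) / det2 (P a) (P b) * det2 (P e) (P b) := by
        field_simp
        linear_combination det2_mul_det2 (P e) w (P a) (P b)
      rw [Multiset.map_cons, Multiset.prod_cons, hw]
      ring
    have hcard : ∀ c ∈ Y, (Y.erase c).card = Multiset.card ws + 2 := fun c hc => by
      rw [card_erase_of_mem hc, hY, Multiset.card_cons]; rfl
    have hsub : ∀ c, ((Y.erase c : Finset ι) : Set ι) ⊆ Y :=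
      fun c => coe_subset.2 (erase_subset _ _)
    simp_rw [hsplit, sum_sub_distrib, ← mul_sum, sum_det2_mul_prod_inv_erase P hP ha,
      sum_det2_mul_prod_inv_erase P hP hb, ih (hP.mono (hsub a)) (hcard a ha),
      ih (hP.mono (hsub b)) (hcard b hb), mul_zero, sub_zero]

end Det2

section ProjectiveLine
variable [DecidableEq F]

def projScale (x : F × F) : F := if x.2 = 0 then x.1⁻¹ else x.2⁻¹

lemma projScale_ne_zero {x : F × F} (hx : x ≠ 0) : projScale x ≠ 0 := by
  unfold projScale
  split_ifs with h
  · exact inv_ne_zero fun h1 => hx (Prod.ext h1 h)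
  · exact inv_ne_zero h

lemma injOn_projScale_smul {ι : Type*} {P : ι → F × F} {I : Finset ι}
    (hP : (I : Set ι).Pairwise fun a b => det2 (P a) (P b) ≠ 0) (hP0 : ∀ s ∈ I, P s ≠ 0) :
    Set.InjOn (fun s => projScale (P s) • P s) I := by
  intro a ha b hb hab
  by_contra hne
  have h : det2 (projScale (P a) • P a) (projScale (P b) • P b) = 0 := by
    rw [show projScale (P a) • P a = projScale (P b) • P b from hab, det2_self]
  rw [det2_smul_smul] at h
  exact mul_ne_zero (mul_ne_zero (projScale_ne_zero (hP0 a ha)) (projScale_ne_zero (hP0 b hb)))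
    (hP ha hb hne) h

variable [Fintype F]

def projLine : Finset (F × F) := insert (1, 0) (univ.image fun x => (x, 1))

lemma mem_projLine {x : F × F} : x ∈ projLine ↔ x = (1, 0) ∨ x.2 = 1 := by
  simp only [projLine, mem_insert, mem_image, mem_univ, true_and]
  exact or_congr_right ⟨by rintro ⟨a, rfl⟩; rfl, fun h => ⟨x.1, by rw [← h]⟩⟩

lemma one_zero_notMem_image : ((1, 0) : F × F) ∉ univ.image fun x : F => (x, 1) := by
  simp

lemma card_projLine : (projLine : Finset (F × F)).card = Fintype.card F + 1 := by
  rw [projLine, card_insert_of_notMem one_zero_notMem_image,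
    card_image_of_injective _ fun a b h => (Prod.ext_iff.1 h).1, card_univ]

lemma projScale_smul_mem_projLine {x : F × F} (hx : x ≠ 0) : projScale x • x ∈ projLine := by
  rw [mem_projLine]
  unfold projScale
  split_ifs with h
  · have h1 : x.1 ≠ 0 := fun h1 => hx (Prod.ext h1 h)
    left; ext <;> simp [h, h1]
  · right; simp [h]

lemma prod_erase_sub_eq_neg_one (a : F) : ∏ b ∈ univ.erase a, (a - b) = -1 := by
  have h : ∏ x : Fˣ, (x : F) = -1 := by
    simpa using congrArg Units.val (FiniteField.prod_univ_units_id_eq_neg_one (K := F))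
  rw [← h]
  refine prod_bij' (fun b hb => Units.mk0 (a - b) (sub_ne_zero.2 (ne_of_mem_erase hb).symm))
    (fun x _ => a - x) (by simp) (by simp) (by simp) (by simp) (by simp)

lemma prod_erase_det2 {x : F × F} (hx : x ∈ projLine) : ∏ y ∈ projLine.erase x, det2 x y = 1 := by
  rcases mem_projLine.1 hx with rfl | hx2
  · rw [projLine, erase_insert one_zero_notMem_image,
      prod_image fun a _ b _ h => (Prod.ext_iff.1 h).1]
    simp [det2]
  · obtain ⟨a, rfl⟩ : ∃ a, x = (a, 1) := ⟨x.1, by rw [← hx2]⟩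
    have hne : ((1, 0) : F × F) ≠ (a, 1) := by simp
    rw [projLine, erase_insert_of_ne hne, prod_insert (by simp), ← image_erase
      fun a b h => (Prod.ext_iff.1 h).1, prod_image fun a _ b _ h => (Prod.ext_iff.1 h).1]
    simp [det2, prod_erase_sub_eq_neg_one]

variable {ι : Type*}

def projLineCompl (P : ι → F × F) (I : Finset ι) : Finset (F × F) :=
  projLine \ I.image fun s => projScale (P s) • P s

variable {P : ι → F × F} {I : Finset ι}
  (hP : (I : Set ι).Pairwise fun a b => det2 (P a) (P b) ≠ 0) (hP0 : ∀ s ∈ I, P s ≠ 0)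
include hP hP0

omit hP in
lemma image_projScale_smul_subset : I.image (fun s => projScale (P s) • P s) ⊆ projLine := by
  intro x hx
  obtain ⟨s, hs, rfl⟩ := mem_image.1 hx
  exact projScale_smul_mem_projLine (hP0 s hs)

lemma card_projLineCompl_add_card : (projLineCompl P I).card + I.card = Fintype.card F + 1 := by
  have hsub := image_projScale_smul_subset hP0
  have hinj := injOn_projScale_smul hP hP0
  have hle := card_le_card hsub
  rw [card_image_of_injOn hinj, card_projLine] at hle
  rw [projLineCompl, card_sdiff_of_subset hsub, card_image_of_injOn hinj, card_projLine]
  omega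

/-- Segre's lemma of tangents on the projective line: up to a factor independent of `e`, the
inverse of `∏ det2 (P e) (P s)` is the value at `P e` of the binary form vanishing at the points
missed by `P`. -/
lemma inv_prod_det2_erase [DecidableEq ι] {e : ι} (he : e ∈ I) :
    (∏ s ∈ I.erase e, det2 (P e) (P s))⁻¹ =
      (∏ s ∈ I, projScale (P s)) * ∏ x ∈ projLineCompl P I, det2 (P e) x := by
  set c := fun s => projScale (P s)
  set Q := fun s => c s • P s
  have hinj : Set.InjOn Q I := injOn_projScale_smul hP hP0
  have hsub : (I.erase e).image Q ⊆ projLine.erase (Q e) := by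
    intro x hx
    obtain ⟨s, hs, rfl⟩ := mem_image.1 hx
    exact mem_erase.2 ⟨fun h => ne_of_mem_erase hs (hinj (mem_of_mem_erase hs) he h),
      projScale_smul_mem_projLine (hP0 s (mem_of_mem_erase hs))⟩
  have hdiff : projLine.erase (Q e) \ (I.erase e).image Q = projLineCompl P I := by
    ext x
    simp only [projLineCompl, mem_sdiff, mem_erase, mem_image]
    constructor
    · rintro ⟨⟨hxe, hx⟩, hxI⟩
      refine ⟨hx, fun ⟨s, hs, hsx⟩ => ?_⟩
      rcases eq_or_ne s e with rfl | hse
      · exact hxe hsx.symm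
      · exact hxI ⟨s, ⟨hse, hs⟩, hsx⟩
    · rintro ⟨hx, hxI⟩
      exact ⟨⟨fun h => hxI ⟨e, he, h.symm⟩, hx⟩, fun ⟨s, hs, hsx⟩ => hxI ⟨s, hs.2, hsx⟩⟩
  have hpow : c e ^ (projLineCompl P I).card * c e ^ (I.erase e).card = c e := by
    have hT := card_projLineCompl_add_card hP hP0
    have hI := card_pos.2 ⟨e, he⟩
    rw [← pow_add, card_erase_of_mem he, show (projLineCompl P I).card + (I.card - 1) =
      Fintype.card F by omega, FiniteField.pow_card]
  have h1 := prod_erase_det2 (projScale_smul_mem_projLine (hP0 e he))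
  rw [← prod_sdiff hsub, hdiff, prod_image (hinj.mono (coe_subset.2 (erase_subset e I)))] at h1
  simp only [Q, det2_smul_left, det2_smul_right, prod_mul_distrib, prod_const] at h1
  rw [← mul_prod_erase I c he]
  refine inv_eq_of_mul_eq_one_left ?_
  linear_combination h1 - (∏ s ∈ I.erase e, c s) * (∏ x ∈ projLineCompl P I, det2 (P e) x) *
    (∏ s ∈ I.erase e, det2 (P e) (P s)) * hpow

omit hP hP0 in
/-- The case `k = 2` of the theorem. -/
theorem sum_prod_inv_det2_eq_zero [DecidableEq ι]
    (hP : (I : Set ι).Pairwise fun a b => det2 (P a) (P b) ≠ 0) {Y : Finset ι} (hYI : Y ⊆ I)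
    (hcard : Y.card + I.card = Fintype.card F + 3) :
    ∑ e ∈ Y, (∏ s ∈ I.erase e, (det2 (P e) (P s))⁻¹) * ∏ u ∈ Y.erase e, (det2 (P e) (P u))⁻¹ =
      0 := by
  have hP0 : ∀ s ∈ I, P s ≠ 0 := by
    intro s hs h0
    have := card_le_card hYI
    have := Fintype.card_pos (α := F)
    obtain ⟨s', hs', hne⟩ := exists_mem_ne (show 1 < I.card by omega) s
    exact hP hs hs' hne.symm (by simp [det2, h0])
  have key := sum_prod_det2_mul_prod_inv_eq_zero P (projLineCompl P I).val
    (hP.mono (coe_subset.2 hYI))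
    (by have := card_projLineCompl_add_card hP hP0; rw [card_val]; omega)
  calc _ = ∑ e ∈ Y, (∏ s ∈ I, projScale (P s)) * (((projLineCompl P I).val.map (det2 (P e))).prod *
        ∏ u ∈ Y.erase e, (det2 (P e) (P u))⁻¹) := sum_congr rfl fun e he => by
          rw [prod_inv_distrib, inv_prod_det2_erase hP hP0 (hYI he),
            prod_eq_multiset_prod (projLineCompl P I), mul_assoc]
    _ = 0 := by rw [← mul_sum, key, mul_zero]

end ProjectiveLine

namespace AlternatingMap
variable {R M N : Type*} [CommRing R] [AddCommGroup M] [Module R M] [AddCommGroup N] [Module R N]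
  {n : ℕ}

def consBilin (f : M [⋀^Fin (n + 1 + 1)]→ₗ[R] N) (p : Fin n → M) : M →ₗ[R] M →ₗ[R] N :=
  LinearMap.mk₂ R (fun u v => f (Fin.cons u (Fin.cons v p)))
    (fun u u' _ => f.map_vecCons_add _ u u') (fun c u _ => f.map_vecCons_smul _ c u)
    (fun u v v' => (f.curryLeft u).map_vecCons_add p v v')
    (fun c u v => (f.curryLeft u).map_vecCons_smul p c v)

variable (f : M [⋀^Fin (n + 1 + 1)]→ₗ[R] N) (p : Fin n → M)

lemma consBilin_isAlt : (f.consBilin p).IsAlt := fun _ =>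
  f.map_eq_zero_of_eq _ (i := 0) (j := 1) rfl Fin.zero_ne_one

lemma consBilin_apply_left_eq_zero (j : Fin n) (v : M) : f.consBilin p (p j) v = 0 :=
  f.map_eq_zero_of_eq _ (i := 0) (j := j.succ.succ) rfl (Fin.succ_ne_zero _).symm

lemma consBilin_apply_right_eq_zero (u : M) (j : Fin n) : f.consBilin p u (p j) = 0 :=
  f.map_eq_zero_of_eq _ (i := 1) (j := j.succ.succ) rfl
    (Fin.succ_injective _ |>.ne (Fin.succ_ne_zero _).symm)

end AlternatingMap

lemma Matrix.exists_det_comp_eq_mul_of_range_eq {n ι R : Type*} [Fintype n] [DecidableEq n]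
    [CommRing R] {w₁ w₂ : n → ι} (h₁ : Function.Injective w₁) (h₂ : Function.Injective w₂)
    (h : Set.range w₁ = Set.range w₂) :
    ∃ ε : R, ε * ε = 1 ∧ ∀ v : ι → n → R, (of (v ∘ w₁)).det = ε * (of (v ∘ w₂)).det := by
  let σ : Equiv.Perm n :=
    (Equiv.ofInjective w₁ h₁).trans ((Equiv.setCongr h).trans (Equiv.ofInjective w₂ h₂).symm)
  have hσ : ∀ i, w₂ (σ i) = w₁ i := fun i => by
    simp only [σ, Equiv.trans_apply, Equiv.apply_ofInjective_symm, Equiv.setCongr_apply,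
      Equiv.ofInjective_apply]
  refine ⟨(Equiv.Perm.sign σ : R), ?_, fun v => ?_⟩
  · have := congrArg (fun u : ℤˣ => ((u : ℤ) : R)) (Int.units_mul_self (Equiv.Perm.sign σ))
    push_cast at this
    exact this
  · rw [← Matrix.det_permute σ]
    congr 1
    ext i j
    simp [hσ]

section Arc
variable {k : ℕ} {ι : Type*} {g : ι ↪ (Fin k → F)}

lemma IsArc.linearIndependent_comp (hG : IsArc (Set.range g)) {w : Fin k → ι}
    (hw : Function.Injective w) : LinearIndependent F (g ∘ w) := by
  classical
  have hinj : Function.Injective (g ∘ w) := g.injective.comp hw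
  have hli := hG (univ.image (g ∘ w))
    (by rw [coe_image, coe_univ, Set.image_univ]; exact Set.range_comp_subset_range w g)
    (by rw [card_image_of_injective _ hinj, card_univ, Fintype.card_fin])
  exact hli.comp (fun i => ⟨g (w i), mem_image_of_mem _ (mem_univ i)⟩)
    fun a b h => hinj (congrArg Subtype.val h)

lemma IsArc.det_ne_zero (hG : IsArc (Set.range g)) {w : Fin k → ι} (hw : Function.Injective w) :
    (Matrix.of (g ∘ w)).det ≠ 0 :=
  ((Matrix.isUnit_iff_isUnit_det _).1
    (Matrix.linearIndependent_rows_iff_isUnit.1 (hG.linearIndependent_comp hw))).ne_zero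

lemma IsArc.linearMap_eq_zero (hG : IsArc (Set.range g)) {T : Finset ι} (hT : T.card = k)
    {β : (Fin k → F) →ₗ[F] F} (hβ : ∀ i ∈ T, β (g i) = 0) : β = 0 := by
  let w : Fin k → ι := fun i => T.equivFin.symm (Fin.cast hT.symm i)
  have hw : Function.Injective w := fun a b h => by
    simpa [w, Fin.ext_iff] using T.equivFin.symm.injective (Subtype.ext h)
  have hspan := (hG.linearIndependent_comp hw).span_eq_top_of_card_eq_finrank' (by simp)
  refine LinearMap.ext_on hspan ?_
  rintro _ ⟨i, rfl⟩
  exact hβ _ (T.equivFin.symm _).2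

end Arc

section ArcDeterminants
variable {k m : ℕ}

def sortedVecs {V : Type*} (g : Fin m → V) (A : Finset (Fin m)) {n : ℕ} (hA : A.card = n) :
    Fin n → V :=
  fun j => g (A.orderEmbOfFin hA j)

lemma exists_sortedVecs_eq {V : Type*} (g : Fin m → V) {A : Finset (Fin m)} {n : ℕ}
    (hA : A.card = n) {i : Fin m} (hi : i ∈ A) : ∃ j, sortedVecs g A hA j = g i := by
  obtain ⟨j, hj⟩ : i ∈ Set.range (A.orderEmbOfFin hA) := by rwa [range_orderEmbOfFin]
  exact ⟨j, by rw [sortedVecs, hj]⟩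

lemma dA_eq_consBilin (h : k - 2 + 1 + 1 = k) (p : Fin (k - 2) → Fin k → F) (u v : Fin k → F) :
    dA p u v = ((Matrix.detRowAlternating : (Fin k → F) [⋀^Fin k]→ₗ[F] F).domDomCongr
      (finCongr h.symm)).consBilin p u v := by
  rw [dA, dif_pos h]; rfl

variable {g : Fin m ↪ (Fin k → F)}

/-- The three-term Plücker relation: after projecting from `A`, `dA` becomes a `2 × 2`
determinant in the coordinates `dA (g a) ·` and `dA (g b) ·`. -/
lemma IsArc.dA_mul_dA (hG : IsArc (Set.range g)) (hk : 2 ≤ k) {A : Finset (Fin m)}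
    (hA : A.card = k - 2) {a b : Fin m} (ha : a ∉ A) (hb : b ∉ A) (hab : a ≠ b)
    (v w : Fin k → F) :
    dA (sortedVecs g A hA) (g a) (g b) * dA (sortedVecs g A hA) v w =
      dA (sortedVecs g A hA) (g a) v * dA (sortedVecs g A hA) (g b) w -
        dA (sortedVecs g A hA) (g b) v * dA (sortedVecs g A hA) (g a) w := by
  have h2 : k - 2 + 1 + 1 = k := by omega
  simp only [dA_eq_consBilin h2]
  set f := (Matrix.detRowAlternating : (Fin k → F) [⋀^Fin k]→ₗ[F] F).domDomCongr (finCongr h2.symm)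
  have hAlt := f.consBilin_isAlt (sortedVecs g A hA)
  have hleft := f.consBilin_apply_left_eq_zero (sortedVecs g A hA)
  have hright := f.consBilin_apply_right_eq_zero (sortedVecs g A hA)
  generalize f.consBilin (sortedVecs g A hA) = B at *
  have hβ : B (g a) (g b) • B.flip w - B (g b) w • B (g a) + B (g a) w • B (g b) = 0 := by
    refine hG.linearMap_eq_zero (T := insert a (insert b A)) ?_ ?_
    · rw [card_insert_of_notMem (by simp [hab, ha]), card_insert_of_notMem hb]; omega
    simp only [mem_insert, LinearMap.add_apply, LinearMap.sub_apply, LinearMap.smul_apply,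
      LinearMap.flip_apply, smul_eq_mul]
    rintro i (rfl | rfl | hi)
    · rw [hAlt.self_eq_zero, ← hAlt.neg (g i) (g b)]; ring
    · rw [hAlt.self_eq_zero]; ring
    · obtain ⟨j, hj⟩ := exists_sortedVecs_eq g hA hi
      rw [← hj, hleft, hright, hright]; ring
  have := LinearMap.congr_fun hβ v
  simp only [LinearMap.add_apply, LinearMap.sub_apply, LinearMap.smul_apply, LinearMap.flip_apply,
    smul_eq_mul, LinearMap.zero_apply] at this
  linear_combination this

lemma IsArc.dA_ne_zero (hG : IsArc (Set.range g)) (hk : 2 ≤ k) {A : Finset (Fin m)}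
    (hA : A.card = k - 2) {a b : Fin m} (ha : a ∉ A) (hb : b ∉ A) (hab : a ≠ b) :
    dA (sortedVecs g A hA) (g a) (g b) ≠ 0 := by
  have h2 : k - 2 + 1 + 1 = k := by omega
  have hrows : (Fin.cons (g a) (Fin.cons (g b) (sortedVecs g A hA)) : Fin (k - 2 + 1 + 1) → _) =
      g ∘ Fin.cons a (Fin.cons b (A.orderEmbOfFin hA)) := by
    rw [Fin.comp_cons, Fin.comp_cons]; rfl
  rw [dA, dif_pos h2, hrows, Function.comp_assoc]
  refine hG.det_ne_zero ((Fin.cons_injective_iff.2 ⟨?_, Fin.cons_injective_iff.2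
    ⟨?_, (A.orderEmbOfFin hA).injective⟩⟩).comp (Fin.cast_injective _)) <;>
    simp [Fin.range_cons, range_orderEmbOfFin, hab, ha, hb]

lemma IsArc.detWith_ne_zero (hG : IsArc (Set.range g)) {C : Finset (Fin m)} (hC : C.card + 1 = k)
    {s : Fin m} (hs : s ∉ C) : detWith g (g s) C ≠ 0 := by
  have hrows : (Fin.cons (g s) fun j => g (C.orderEmbOfFin rfl j) : Fin (C.card + 1) → _) =
      g ∘ Fin.cons s (C.orderEmbOfFin rfl) := by
    rw [Fin.comp_cons]; rfl
  rw [detWith, dif_pos hC, hrows, Function.comp_assoc]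
  refine hG.det_ne_zero ((Fin.cons_injective_iff.2 ⟨?_, (C.orderEmbOfFin rfl).injective⟩).comp
    (Fin.cast_injective _))
  simpa [range_orderEmbOfFin] using hs

end ArcDeterminants

/-- The rows of `det(x, A ∪ {e})` are those of `dA(e, x)` permuted in a way that does not depend
on `x`; to see this, the row `x` is indexed by `none`. -/
lemma exists_detWith_insert_eq_mul_dA {k m : ℕ} (g : Fin m → Fin k → F) (hk : 2 ≤ k)
    {A : Finset (Fin m)} (hA : A.card = k - 2) {e : Fin m} (he : e ∉ A) :
    ∃ ε : F, ε * ε = 1 ∧ ∀ x, detWith g x (insert e A) = ε * dA (sortedVecs g A hA) (g e) x := by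
  have hC : (insert e A).card + 1 = k := by rw [card_insert_of_notMem he]; omega
  have h2 : k - 2 + 1 + 1 = k := by omega
  obtain ⟨ε, hε, hdet⟩ := Matrix.exists_det_comp_eq_mul_of_range_eq (R := F)
    (w₁ := Fin.cons none (some ∘ (insert e A).orderEmbOfFin rfl) ∘ Fin.cast hC.symm)
    (w₂ := Fin.cons (some e) (Fin.cons none (some ∘ A.orderEmbOfFin hA)) ∘ Fin.cast h2.symm)
    ((Fin.cons_injective_iff.2 ⟨by simp, (Option.some_injective _).comp
      (orderEmbOfFin _ rfl).injective⟩).comp (Fin.cast_injective _))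
    ((Fin.cons_injective_iff.2 ⟨by rw [Fin.range_cons, Set.range_comp, range_orderEmbOfFin]; simpa,
      Fin.cons_injective_iff.2 ⟨by simp, (Option.some_injective _).comp
        (orderEmbOfFin _ hA).injective⟩⟩).comp (Fin.cast_injective _))
    (by
      change Set.range (_ ∘ finCongr hC.symm) = Set.range (_ ∘ finCongr h2.symm)
      rw [(finCongr hC.symm).surjective.range_comp, (finCongr h2.symm).surjective.range_comp]
      simp [Fin.range_cons, Set.range_comp, range_orderEmbOfFin, Set.image_insert_eq,
        Set.insert_comm])
  refine ⟨ε, hε, fun x => ?_⟩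
  have h := hdet fun o => o.elim x g
  rw [← Function.comp_assoc, ← Function.comp_assoc, Fin.comp_cons, Fin.comp_cons,
    Fin.comp_cons] at h
  rw [detWith, dif_pos hC, dA, dif_pos h2]
  exact h

lemma pow_card_add_one_eq_one [Fintype F] {ε : F} (hε : ε * ε = 1) :
    ε ^ (Fintype.card F + 1) = 1 := by
  rw [pow_succ, FiniteField.pow_card, hε]

section Projection
variable {k m : ℕ} {g : Fin m ↪ (Fin k → F)} {A : Finset (Fin m)} (hA : A.card = k - 2)

variable (g) in
noncomputable def projFrom (a b s : Fin m) : F × F :=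
  (dA (sortedVecs g A hA) (g a) (g s), dA (sortedVecs g A hA) (g b) (g s))

variable (hG : IsArc (Set.range g)) (hk : 2 ≤ k) {a b : Fin m} (ha : a ∉ A) (hb : b ∉ A)
  (hab : a ≠ b)
include hG hk ha hb hab

lemma IsArc.det2_projFrom (x y : Fin m) :
    det2 (projFrom g hA a b x) (projFrom g hA a b y) =
      dA (sortedVecs g A hA) (g a) (g b) * dA (sortedVecs g A hA) (g x) (g y) := by
  rw [hG.dA_mul_dA hk hA ha hb hab]; rfl

lemma IsArc.pairwise_det2_projFrom_ne_zero :
    ((univ \ A : Finset (Fin m)) : Set (Fin m)).Pairwise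
      fun x y => det2 (projFrom g hA a b x) (projFrom g hA a b y) ≠ 0 := by
  intro x hx y hy hxy
  rw [hG.det2_projFrom hA hk ha hb hab]
  exact mul_ne_zero (hG.dA_ne_zero hk hA ha hb hab)
    (hG.dA_ne_zero hk hA (mem_sdiff.1 hx).2 (mem_sdiff.1 hy).2 hxy)

lemma IsArc.exists_inv_detWith_insert_eq {e : Fin m} (he : e ∉ A) :
    ∃ ε : F, ε * ε = 1 ∧ ∀ s, (detWith g (g s) (insert e A))⁻¹ = ε *
      dA (sortedVecs g A hA) (g a) (g b) * (det2 (projFrom g hA a b e) (projFrom g hA a b s))⁻¹ := by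
  obtain ⟨ε, hε, hrow⟩ := exists_detWith_insert_eq_mul_dA g hk hA he
  refine ⟨ε, hε, fun s => ?_⟩
  rw [hrow, hG.det2_projFrom hA hk ha hb hab, mul_inv, mul_inv, inv_eq_of_mul_eq_one_left hε,
    mul_assoc, mul_inv_cancel_left₀ (hG.dA_ne_zero hk hA ha hb hab)]

end Projection

theorem IsArc.sum_prod_inv_detWith_insert_eq_zero [Fintype F] {k m : ℕ}
    {g : Fin m ↪ (Fin k → F)} (hG : IsArc (Set.range g)) (hk : 2 ≤ k) {A : Finset (Fin m)}
    (hA : A.card = k - 2) {Y : Finset (Fin m)} (hYA : Disjoint Y A)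
    (hcard : Y.card + m = Fintype.card F + k + 1) :
    ∑ e ∈ Y, (∏ s ∈ (univ \ A).erase e, (detWith g (g s) (insert e A))⁻¹) *
      ∏ u ∈ Y.erase e, (detWith g (g u) (insert e A))⁻¹ = 0 := by
  classical
  have hYI : Y ⊆ univ \ A := fun y hy => mem_sdiff.2 ⟨mem_univ y, disjoint_left.1 hYA hy⟩
  have hI : (univ \ A).card = m - (k - 2) := by
    rw [card_sdiff_of_subset (subset_univ A), card_univ, Fintype.card_fin, hA]
  have hAm : A.card ≤ m := by simpa using card_le_univ A
  have hYI' := card_le_card hYI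
  have hq := Fintype.card_pos (α := F)
  obtain ⟨a, ha, b, hb, hab⟩ := one_lt_card.1 (show 1 < (univ \ A).card by omega)
  replace ha := (mem_sdiff.1 ha).2
  replace hb := (mem_sdiff.1 hb).2
  set P := projFrom g hA a b
  set d := dA (sortedVecs g A hA) (g a) (g b)
  have hterm : ∀ e ∈ Y,
      (∏ s ∈ (univ \ A).erase e, (detWith g (g s) (insert e A))⁻¹) *
        ∏ u ∈ Y.erase e, (detWith g (g u) (insert e A))⁻¹ =
      d ^ (Fintype.card F + 1) * ((∏ s ∈ (univ \ A).erase e, (det2 (P e) (P s))⁻¹) *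
        ∏ u ∈ Y.erase e, (det2 (P e) (P u))⁻¹) := by
    intro e he
    obtain ⟨ε, hε, hrow⟩ :=
      hG.exists_inv_detWith_insert_eq hA hk ha hb hab (disjoint_left.1 hYA he)
    have hY := card_pos.2 ⟨e, he⟩
    have hpow : (ε * d) ^ (((univ \ A).erase e).card + (Y.erase e).card) =
        d ^ (Fintype.card F + 1) := by
      rw [card_erase_of_mem (hYI he), card_erase_of_mem he,
        show (univ \ A).card - 1 + (Y.card - 1) = Fintype.card F + 1 by omega, mul_pow,
        pow_card_add_one_eq_one hε, one_mul]
    simp only [hrow, prod_mul_distrib, prod_const]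
    rw [← hpow, pow_add]
    ring
  rw [sum_congr rfl hterm, ← mul_sum,
    sum_prod_inv_det2_eq_zero (hG.pairwise_det2_projFrom_ne_zero hA hk ha hb hab) hYI (by omega),
    mul_zero]

lemma filter_powersetCard_succ_eq_image_insert {α : Type*} [DecidableEq α] {E A : Finset α}
    (hAE : A ⊆ E) :
    (E.powersetCard (A.card + 1)).filter (fun C => A ⊆ C) = (E \ A).image (insert · A) := by
  ext C
  simp only [mem_filter, mem_powersetCard, mem_image, mem_sdiff]
  constructor
  · rintro ⟨⟨hCE, hC⟩, hAC⟩
    obtain ⟨e, he, rfl⟩ := exists_eq_insert_iff.2 ⟨hAC, hC.symm⟩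
    exact ⟨e, ⟨hCE (mem_insert_self e A), he⟩, rfl⟩
  · rintro ⟨e, ⟨heE, he⟩, rfl⟩
    exact ⟨⟨insert_subset heE hAE, card_insert_of_notMem he⟩, subset_insert e A⟩

theorem stmt7_general [Fintype F] {k m t : ℕ} (hk : 3 ≤ k)
    (g : Fin m ↪ (Fin k → F)) (hG : IsArc (Set.range g))
    (ht : m + t = Fintype.card F + k - 1) :
    ∃ c : Finset (Fin m) → F,
      (∀ C : Finset (Fin m), C.card = k - 1 → c C ≠ 0) ∧
      ∀ E : Finset (Fin m), E.card = k + t →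
        ∀ A : Finset (Fin m), A ⊆ E → A.card = k - 2 →
          ∑ C ∈ (E.powersetCard (k - 1)).filter (fun C => A ⊆ C),
            c C * ∏ u ∈ E \ C, (detWith (⇑g) (g u) C)⁻¹ = 0 := by
  classical
  refine ⟨fun C => ∏ s ∈ univ \ C, (detWith g (g s) C)⁻¹, fun C hC => ?_,
    fun E hE A hAE hA => ?_⟩
  · exact prod_ne_zero_iff.2 fun s hs =>
      inv_ne_zero (hG.detWith_ne_zero (by omega) (mem_sdiff.1 hs).2)
  · rw [show k - 1 = A.card + 1 by omega, filter_powersetCard_succ_eq_image_insert hAE,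
      sum_image fun x hx y _ h => (insert_inj (mem_sdiff.1 hx).2).1 h]
    simp only [sdiff_insert]
    exact hG.sum_prod_inv_detWith_insert_eq_zero (by omega) hA disjoint_sdiff_self_left
      (by rw [card_sdiff_of_subset hAE]; omega)

theorem stmt7 [Fintype F] {k m t : ℕ} (hk : 3 ≤ k)
    (g : Fin m ↪ (Fin k → F)) (hG : IsArc (Set.range g)) (hm : k ≤ m)
    (ht : m + t = Fintype.card F + k - 1) :
    ∃ c : Finset (Fin m) → F,
      (∀ C : Finset (Fin m), C.card = k - 1 → c C ≠ 0) ∧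
      ∀ E : Finset (Fin m), E.card = k + t →
        ∀ A : Finset (Fin m), A ⊆ E → A.card = k - 2 →
          ∑ C ∈ (E.powersetCard (k - 1)).filter (fun C => A ⊆ C),
            c C * ∏ u ∈ E \ C, (detWith (⇑g) (g u) C)⁻¹ = 0 :=
  stmt7_general hk g hG ht
end

section
/- Let q be odd, let S be an arc of F_q^k with |S| ≥ k, a fixed linear order, and t = q+k−1−|S| ≥ 0, let tangent polynomials f_A be chosen for all subsets A of S of size k−2, and let (α_A), (α_C) be compatible families of nonzero scalars. Let E be a subset of S of size k+2t−1 and let φ be the associated polynomial. Then for every subset A of S of size k−2, writing A = {a_1, …, a_{k−2}} in increasing order, one has φ(X, a_1, …, a_{k−2}) = α_A² · f_A(X)² for every X ∈ F_q^k. -/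
open Finset

variable {F : Type*} [Field F]

/-!
Write `k = n + 2` and `W` for the vectors of `A`. The linear forms vanishing on `W` form a plane,
spanned by two coordinate forms `β₀, β₁`; the forms `X ↦ det(z, X, W)` and the factors of `f_A`
lie in it, so both sides of the identity are binary forms of degree `2t` in `(β₀ X, β₁ X)`.
The at least `2t + 1` points of `E \ A` have pairwise non-proportional coordinates, because any
`k` points of the arc are a basis; hence it suffices to prove the identity at `X = e ∈ E \ A`.

There the rows `(e, A)` form the set `A ∪ {e}`, and reordering rows multiplies every
`det(z, ·)` by the same sign, which disappears in the `2t`-fold products of `φ`. If `A ⊆ E`,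
then `A ∪ {e} ⊆ E` is a node of `φ`, where all terms but one vanish and `φ = α_{A∪{e}}²`.
Otherwise, for `a₀ ∈ A \ E` the set `A' = A ∪ {e} \ {a₀}` has the same rows with `a₀` in
front and `|A' \ E| < |A \ E|`, so by induction `φ = α_{A'}² f_{A'}(a₀)² = α_{A∪{e}}²`.
Compatibility turns `α_{A∪{e}}²` into `α_A² f_A(e)²`.
-/

open Finset Function

namespace Polynomial

variable {K : Type*} [Field K]

lemma natDegree_aeval_X_one_le {P : MvPolynomial (Fin 2) K} {n : ℕ} (hP : P.IsHomogeneous n) :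
    (MvPolynomial.aeval ![(X : K[X]), 1] P).natDegree ≤ n := by
  rw [P.as_sum, map_sum]
  refine natDegree_sum_le_of_forall_le _ _ fun m hm => ?_
  have hm : m 0 + m 1 = n := by
    simpa [Finsupp.weight_apply, Finsupp.sum_fintype, Fin.sum_univ_two] using
      hP (MvPolynomial.mem_support_iff.mp hm)
  simp only [MvPolynomial.aeval_monomial, Finsupp.prod_fintype _ _ (fun _ => pow_zero _),
    Fin.prod_univ_two, Matrix.cons_val_zero, Matrix.cons_val_one, one_pow, mul_one, algebraMap_eq]
  exact (natDegree_C_mul_X_pow_le _ _).trans (by omega)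

lemma eval_homogenize_of_eq_zero (p : K[X]) (n : ℕ) {x : Fin 2 → K} (hx : x 1 = 0) :
    MvPolynomial.eval x (p.homogenize n) = p.coeff n * x 0 ^ n := by
  rw [homogenize, map_sum, sum_eq_single (n, 0)]
  · simp [MvPolynomial.eval_monomial, Finsupp.prod_fintype]
  · rintro ⟨i, j⟩ hij hne
    obtain rfl | hj := Nat.eq_zero_or_pos j
    · simp_all
    · simp [MvPolynomial.eval_monomial, Finsupp.prod_fintype, hx, hj.ne']
  · simp

lemma eq_zero_of_eval_homogenize_eq_zero {p : K[X]} {n : ℕ} (hp : p.natDegree ≤ n)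
    {ι : Type*} (s : Finset ι) (v : ι → Fin 2 → K) (hs : n < #s)
    (hv : ∀ i ∈ s, ∀ j ∈ s, i ≠ j → v i 0 * v j 1 ≠ v j 0 * v i 1)
    (h0 : ∀ i ∈ s, MvPolynomial.eval (v i) (p.homogenize n) = 0) : p = 0 := by
  classical
  set s' := s.filter fun i => v i 1 ≠ 0
  have hroot : ∀ x ∈ s'.image (fun i => v i 0 / v i 1), p.eval x = 0 := by
    simp only [mem_image, mem_filter, s']
    rintro _ ⟨i, ⟨hi, hi1⟩, rfl⟩
    have h := h0 i hi
    rw [eval_homogenize hp _ hi1] at h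
    exact (mul_eq_zero.mp h).resolve_right (pow_ne_zero _ hi1)
  have hcard : #(s'.image fun i => v i 0 / v i 1) = #s' := by
    refine card_image_of_injOn fun i hi j hj hij => by_contra fun hne => ?_
    simp only [coe_filter, Set.mem_ofPred_eq, s'] at hi hj
    refine hv i hi.1 j hj.1 hne ?_
    field_simp [hi.2, hj.2] at hij
    linear_combination hij
  refine eq_zero_of_degree_lt_of_eval_finset_eq_zero _ ?_ hroot
  rw [hcard]
  -- at most one point lies at infinity, and it kills the coefficient of degree `n`
  by_cases hinf : ∃ i₀ ∈ s, v i₀ 1 = 0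
  · obtain ⟨i₀, hi₀, hi₀1⟩ := hinf
    have hs' : s' = s.erase i₀ := by
      ext j
      simp only [mem_filter, mem_erase, s']
      refine ⟨fun ⟨hj, hj1⟩ => ⟨fun h => hj1 (h ▸ hi₀1), hj⟩, fun ⟨hne, hj⟩ => ⟨hj, fun hj1 => ?_⟩⟩
      exact hv j hj i₀ hi₀ hne (by rw [hj1, hi₀1, mul_zero, mul_zero])
    have hcoeff : p.coeff n = 0 := by
      have h := h0 i₀ hi₀
      rw [eval_homogenize_of_eq_zero p n hi₀1] at h
      refine (mul_eq_zero.mp h).resolve_right fun hx => ?_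
      have hn : n ≠ 0 := by
        rintro rfl
        simp at hx
      obtain ⟨j, hj, hne⟩ := exists_mem_ne (show 1 < #s by omega) i₀
      exact hv i₀ hi₀ j hj hne.symm (by rw [eq_zero_of_pow_eq_zero hx, hi₀1]; ring)
    have hdeg : p.degree < n := by
      refine (degree_lt_iff_coeff_zero p n).mpr fun m hm => ?_
      rcases hm.eq_or_lt with rfl | hm
      · exact hcoeff
      · exact coeff_eq_zero_of_natDegree_lt (hp.trans_lt hm)
    rw [hs', card_erase_of_mem hi₀]
    exact hdeg.trans_le (by exact_mod_cast (by omega : n ≤ #s - 1))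
  · push Not at hinf
    rw [show s' = s from filter_true_of_mem hinf]
    exact (degree_le_of_natDegree_le hp).trans_lt (by exact_mod_cast hs)

end Polynomial

namespace MvPolynomial

variable {K : Type*} [Field K]

theorem IsHomogeneous.eq_zero_of_eval_eq_zero {P : MvPolynomial (Fin 2) K} {n : ℕ}
    (hP : P.IsHomogeneous n) {ι : Type*} (s : Finset ι) (v : ι → Fin 2 → K) (hs : n < #s)
    (hv : ∀ i ∈ s, ∀ j ∈ s, i ≠ j → v i 0 * v j 1 ≠ v j 0 * v i 1)
    (h0 : ∀ i ∈ s, eval (v i) P = 0) : P = 0 := by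
  rw [← Polynomial.homogenize_eq_of_isHomogeneous hP rfl] at h0 ⊢
  rw [Polynomial.eq_zero_of_eval_homogenize_eq_zero (Polynomial.natDegree_aeval_X_one_le hP) s v
    hs hv h0, Polynomial.homogenize_zero]

lemma isHomogeneous_prod_card {σ ι R : Type*} [CommSemiring R] {s : Finset ι}
    {φ : ι → MvPolynomial σ R} (h : ∀ i ∈ s, (φ i).IsHomogeneous 1) :
    (∏ i ∈ s, φ i).IsHomogeneous #s := by
  simpa using IsHomogeneous.prod s φ (fun _ => 1) h

end MvPolynomial

section Determinants

variable {n : ℕ}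

lemma detRows_eq_det_cons (z : Fin (n + 2) → F) (Y : Fin (n + 1) → Fin (n + 2) → F) :
    detRows z Y = (Matrix.of (Fin.cons z Y : Fin (n + 2) → Fin (n + 2) → F)).det := by
  rw [detRows, dif_pos (by omega)]
  rfl

lemma det_cons_comp_cast {m : ℕ} (e : m = n + 1) (h : m + 1 = n + 2) (u : Fin (n + 2) → F)
    (Y : Fin m → Fin (n + 2) → F) :
    (Matrix.of ((Fin.cons u Y : Fin (m + 1) → Fin (n + 2) → F) ∘ Fin.cast h.symm)).det =
      (Matrix.of (Fin.cons u (Y ∘ Fin.cast e.symm) : Fin (n + 2) → Fin (n + 2) → F)).det := by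
  subst e
  rfl

lemma detWith_eq_det_cons {M : ℕ} (g : Fin M → Fin (n + 2) → F) (u : Fin (n + 2) → F)
    {C : Finset (Fin M)} (hC : #C = n + 1) :
    detWith g u C = (Matrix.of (Fin.cons u (g ∘ C.orderEmbOfFin hC))).det := by
  rw [detWith, dif_pos (by omega), det_cons_comp_cast hC (by omega)]
  rfl

noncomputable def detSecondRow (u : Fin (n + 2) → F) (W : Fin n → Fin (n + 2) → F) :
    Module.Dual F (Fin (n + 2) → F) :=
  Matrix.detRowAlternating.toMultilinearMap.toLinearMap (Fin.cons u (Fin.cons 0 W)) 1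

lemma detSecondRow_apply (u x : Fin (n + 2) → F) (W : Fin n → Fin (n + 2) → F) :
    detSecondRow u W x = (Matrix.of (Fin.cons u (Fin.cons x W))).det := by
  rw [detSecondRow, MultilinearMap.toLinearMap_apply, ← Fin.succ_zero_eq_one, ← Fin.cons_update,
    Fin.update_cons_zero]
  rfl

lemma detSecondRow_apply_self (u : Fin (n + 2) → F) (W : Fin n → Fin (n + 2) → F) (j : Fin n) :
    detSecondRow u W (W j) = 0 := by
  rw [detSecondRow_apply]
  refine Matrix.det_zero_of_row_eq (i := Fin.succ 0) (j := j.succ.succ)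
    (Fin.succ_injective _ |>.ne (Fin.succ_ne_zero j).symm) ?_
  ext
  simp

lemma exists_det_cons_comp_eq {α : Type*} {ι₁ ι₂ : Fin (n + 1) → α} (h₁ : Injective ι₁)
    (h₂ : Injective ι₂) (hr : Set.range ι₁ = Set.range ι₂) :
    ∃ ε : ℤˣ, ∀ (v : α → Fin (n + 2) → F) (u : Fin (n + 2) → F),
      (Matrix.of (Fin.cons u (v ∘ ι₁))).det = ε * (Matrix.of (Fin.cons u (v ∘ ι₂))).det := by
  set σ : Equiv.Perm (Fin (n + 1)) := (Equiv.ofInjective ι₁ h₁).trans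
    ((Equiv.setCongr hr).trans (Equiv.ofInjective ι₂ h₂).symm)
  have hσ : ∀ j, ι₂ (σ j) = ι₁ j := fun j => by
    simp [σ, Equiv.apply_ofInjective_symm]
  refine ⟨Equiv.Perm.sign (Equiv.Perm.decomposeFin.symm (0, σ)), fun v u => ?_⟩
  rw [← Matrix.det_permute]
  congr 1
  ext i
  refine Fin.cases ?_ (fun j => ?_) i <;> simp [hσ]

end Determinants

lemma Module.Basis.apply_eq_of_apply_succ_succ_eq_zero {V : Type*} [AddCommGroup V] [Module F V]
    {n : ℕ} (b : Module.Basis (Fin (n + 2)) F V) (ℓ : Module.Dual F V)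
    (hℓ : ∀ j : Fin n, ℓ (b j.succ.succ) = 0) (x : V) :
    ℓ x = ℓ (b 0) * b.coord 0 x + ℓ (b 1) * b.coord 1 x := by
  have h := congrArg (· x) (b.sum_dual_apply_smul_coord ℓ)
  simp only [LinearMap.sum_apply, LinearMap.smul_apply, smul_eq_mul] at h
  simp [← h, Fin.sum_univ_succ, hℓ]

section Arc

variable {k M : ℕ} {gS : Fin M ↪ (Fin k → F)}

lemma IsArc.linearIndependent_comp_s14 (hS : IsArc (Set.range gS)) {ι : Type*} [Fintype ι]
    {κ : ι → Fin M} (hκ : Injective κ) (hcard : Fintype.card ι = k) :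
    LinearIndependent F (gS ∘ κ) := by
  classical
  have hinj : Injective (gS ∘ κ) := gS.injective.comp hκ
  have hT : ∀ i, gS (κ i) ∈ univ.image (gS ∘ κ) := fun i => mem_image_of_mem _ (mem_univ i)
  refine (hS _ ?_ ?_).comp (fun i => ⟨gS (κ i), hT i⟩) fun i j h => hinj (congrArg Subtype.val h)
  · rw [coe_image, coe_univ, Set.image_univ]
    exact Set.range_comp_subset_range _ _
  · rw [card_image_of_injective _ hinj, card_univ, hcard]

lemma IsArc.det_ne_zero_s14 (hS : IsArc (Set.range gS)) {κ : Fin k → Fin M} (hκ : Injective κ) :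
    (Matrix.of (gS ∘ κ)).det ≠ 0 :=
  ((Matrix.isUnit_iff_isUnit_det _).mp
    (Matrix.linearIndependent_rows_iff_isUnit.mp (hS.linearIndependent_comp_s14 hκ (by simp)))).ne_zero

noncomputable def IsArc.basis (hS : IsArc (Set.range gS)) {κ : Fin k → Fin M} (hκ : Injective κ) :
    Module.Basis (Fin k) F (Fin k → F) :=
  basisOfLinearIndependentOfCardEqFinrank' _ (hS.linearIndependent_comp_s14 hκ (by simp)) (by simp)

@[simp]
lemma IsArc.basis_apply (hS : IsArc (Set.range gS)) {κ : Fin k → Fin M} (hκ : Injective κ)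
    (i : Fin k) : hS.basis hκ i = gS (κ i) := by
  simp [IsArc.basis]

end Arc

lemma IsArc.coord_mul_coord_ne {n M : ℕ} {gS : Fin M ↪ (Fin (n + 2) → F)}
    (hS : IsArc (Set.range gS)) {ι : Fin n → Fin M} {z₀ z₁ e e' : Fin M}
    (hκ : Injective (Fin.cons z₀ (Fin.cons z₁ ι) : Fin (n + 2) → Fin M))
    (hκ' : Injective (Fin.cons e (Fin.cons e' ι) : Fin (n + 2) → Fin M)) :
    (hS.basis hκ).coord 0 (gS e) * (hS.basis hκ).coord 1 (gS e') ≠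
      (hS.basis hκ).coord 0 (gS e') * (hS.basis hκ).coord 1 (gS e) := by
  set b := hS.basis hκ
  set b' := hS.basis hκ'
  -- `b'.coord 0` and `b'.coord 1` vanish on `gS ∘ ι`, hence are combinations of `b.coord 0` and
  -- `b.coord 1`; at `gS e, gS e'` this exhibits an inverse of the `2 × 2` matrix of `b`-coordinates
  have hrep : ∀ i : Fin (n + 2), (i : ℕ) < 2 → ∀ x, b'.coord i x =
      b'.coord i (b 0) * b.coord 0 x + b'.coord i (b 1) * b.coord 1 x := by
    refine fun i hi => b.apply_eq_of_apply_succ_succ_eq_zero _ fun m => ?_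
    have hm : b m.succ.succ = b' m.succ.succ := by simp [b, b']
    rw [hm, Module.Basis.coord_apply, Module.Basis.repr_self, Finsupp.single_apply, if_neg]
    simp only [Fin.ext_iff, Fin.val_succ]
    omega
  have he : gS e = b' 0 := by simp [b']
  have he' : gS e' = b' 1 := by simp [b']
  have h00 := hrep 0 (by simp) (gS e)
  have h01 := hrep 0 (by simp) (gS e')
  have h10 := hrep 1 (by simp) (gS e)
  have h11 := hrep 1 (by simp) (gS e')
  simp only [he, he', Module.Basis.coord_apply, Module.Basis.repr_self,
    Finsupp.single_apply] at h00 h01 h10 h11 ⊢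
  simp only [↓reduceIte, one_ne_zero, zero_ne_one] at h00 h01 h10 h11
  intro h
  exact one_ne_zero (α := F) <| by
    linear_combination h00 + ((b'.repr (b 0)) 0 * (b.repr (b' 0)) 0
      + (b'.repr (b 1)) 0 * (b.repr (b' 0)) 1) * h11
      - ((b'.repr (b 0)) 1 * (b.repr (b' 0)) 0 + (b'.repr (b 1)) 1 * (b.repr (b' 0)) 1) * h01
      + ((b'.repr (b 0)) 0 * (b'.repr (b 1)) 1 - (b'.repr (b 1)) 0 * (b'.repr (b 0)) 1) * h

section PhiPoly

variable {n M : ℕ}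

lemma phiPoly_comp_eq_of_range_eq (p : ℕ) (g : Fin M → Fin (n + 2) → F)
    (c : Finset (Fin M) → F) {E : Finset (Fin M)} {t : ℕ} (hE : #E = n + 1 + 2 * t)
    {ι₁ ι₂ : Fin (n + 1) → Fin M} (h₁ : Injective ι₁) (h₂ : Injective ι₂)
    (hr : Set.range ι₁ = Set.range ι₂) :
    phiPoly p g c E (g ∘ ι₁) = phiPoly p g c E (g ∘ ι₂) := by
  obtain ⟨ε, hε⟩ := exists_det_cons_comp_eq (F := F) h₁ h₂ hr
  have hε2 : ((ε : ℤ) : F) ^ (2 * t) = 1 := by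
    rw [pow_mul, ← Int.cast_pow, ← Units.val_pow_eq_pow_val, Int.units_sq, Units.val_one,
      Int.cast_one, one_pow]
  refine sum_congr rfl fun C hC => ?_
  obtain ⟨hCE, hCcard⟩ := mem_powersetCard.mp hC
  have hcard : #(E \ C) = 2 * t := by
    rw [card_sdiff_of_subset hCE]
    omega
  simp_rw [detRows_eq_det_cons, hε g, mul_div_assoc, prod_mul_distrib, prod_const, hcard, hε2,
    one_mul]

lemma phiPoly_orderEmbOfFin (p : ℕ) {gS : Fin M ↪ (Fin (n + 2) → F)} (hS : IsArc (Set.range gS))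
    (c : Finset (Fin M) → F) {E C₀ : Finset (Fin M)} (hC₀E : C₀ ⊆ E) (hC₀ : #C₀ = n + 1) :
    phiPoly p gS c E (gS ∘ C₀.orderEmbOfFin hC₀) = c C₀ ^ p := by
  rw [phiPoly, sum_eq_single C₀]
  · rw [prod_eq_one fun z hz => ?_, mul_one]
    rw [detRows_eq_det_cons, detWith_eq_det_cons _ _ hC₀]
    refine div_self ?_
    rw [← Fin.comp_cons]
    refine hS.det_ne_zero_s14 (Fin.cons_injective_iff.mpr ⟨?_, (C₀.orderEmbOfFin hC₀).injective⟩)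
    simpa using (mem_sdiff.mp hz).2
  · intro C hC hne
    obtain ⟨hCE, hCcard⟩ := mem_powersetCard.mp hC
    obtain ⟨x, hxC₀, hxC⟩ :=
      not_subset.mp fun h => hne (eq_of_subset_of_card_le h (by omega)).symm
    obtain ⟨j, rfl⟩ : x ∈ Set.range (C₀.orderEmbOfFin hC₀) := by simpa using hxC₀
    refine mul_eq_zero_of_right _ (prod_eq_zero (mem_sdiff.mpr ⟨hC₀E hxC₀, hxC⟩) ?_)
    rw [detRows_eq_det_cons, Matrix.det_zero_of_row_eq (Fin.succ_ne_zero j).symm (by ext; simp),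
      zero_div]
  · exact fun h => absurd (mem_powersetCard.mpr ⟨hC₀E, by omega⟩) h

end PhiPoly

open MvPolynomial in
lemma IsArc.exists_binary_coords {n M : ℕ} {gS : Fin M ↪ (Fin (n + 2) → F)}
    (hS : IsArc (Set.range gS)) (hM : n + 2 ≤ M) {A : Finset (Fin M)} (hA : #A = n) :
    ∃ (π : (Fin (n + 2) → F) → Fin 2 → F) (lin : Module.Dual F (Fin (n + 2) → F) →
      MvPolynomial (Fin 2) F), (∀ ℓ, (lin ℓ).IsHomogeneous 1) ∧
      (∀ ℓ, (∀ j, ℓ (gS (A.orderEmbOfFin hA j)) = 0) → ∀ y, eval (π y) (lin ℓ) = ℓ y) ∧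
      ∀ e ∉ A, ∀ e' ∉ A, e ≠ e' → π (gS e) 0 * π (gS e') 1 ≠ π (gS e') 0 * π (gS e) 1 := by
  set ι := A.orderEmbOfFin hA
  have hι : ∀ {y z}, y ∉ A → z ∉ A → y ≠ z →
      Injective (Fin.cons y (Fin.cons z ι) : Fin (n + 2) → Fin M) := fun hy hz hyz => by
    simp [Fin.cons_injective_iff, Fin.range_cons, ι, hy, hz, hyz, ι.injective]
  obtain ⟨z₀, hz₀, z₁, hz₁, hz⟩ := one_lt_card.mp (show 1 < #(univ \ A) by
    rw [card_sdiff_of_subset (subset_univ A), card_univ, Fintype.card_fin]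
    omega)
  rw [mem_sdiff] at hz₀ hz₁
  set b := hS.basis (hι hz₀.2 hz₁.2 hz)
  refine ⟨fun y => ![b.coord 0 y, b.coord 1 y], fun ℓ => C (ℓ (b 0)) * X 0 + C (ℓ (b 1)) * X 1,
    fun ℓ => (isHomogeneous_C_mul_X _ 0).add (isHomogeneous_C_mul_X _ 1), fun ℓ hℓ y => ?_,
    fun e he e' he' hne => by simpa using hS.coord_mul_coord_ne (hι hz₀.2 hz₁.2 hz) (hι he he' hne)⟩
  have hbι : ∀ j, b j.succ.succ = gS (ι j) := fun j => by simp [b]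
  rw [b.apply_eq_of_apply_succ_succ_eq_zero ℓ (fun j => hbι j ▸ hℓ j) y]
  simp

open MvPolynomial in
theorem phiPoly_cons_eq_of_nodes {n M t : ℕ} {gS : Fin M ↪ (Fin (n + 2) → F)}
    (hS : IsArc (Set.range gS)) (hM : n + 2 ≤ M) {A : Finset (Fin M)} (hA : #A = n)
    {f : (Fin (n + 2) → F) → F} (hf : IsTangentPoly t (Set.range gS) (gS '' ↑A) f)
    (c : Finset (Fin M) → F) (r : F) {E : Finset (Fin M)} (hE : #E = n + 1 + 2 * t)
    (hnode : ∀ e ∈ E \ A, phiPoly 2 gS c E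
      (Fin.cons (gS e) (gS ∘ A.orderEmbOfFin hA) : Fin (n + 1) → Fin (n + 2) → F) =
        r ^ 2 * f (gS e) ^ 2)
    (x : Fin (n + 2) → F) :
    phiPoly 2 gS c E (Fin.cons x (gS ∘ A.orderEmbOfFin hA) : Fin (n + 1) → Fin (n + 2) → F) =
      r ^ 2 * f x ^ 2 := by
  obtain ⟨π, lin, hlin_hom, hlin, hπ⟩ := hS.exists_binary_coords hM hA
  set W := gS ∘ A.orderEmbOfFin hA
  obtain ⟨α, -, hαA, hfα⟩ := hf
  have hαW : ∀ i j, α i (W j) = 0 := fun i j => by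
    have : W j ∈ gS '' ↑A := ⟨A.orderEmbOfFin hA j, by simp, rfl⟩
    rw [← hαA i] at this
    exact this.2
  set P₁ : MvPolynomial (Fin 2) F := ∑ C' ∈ E.powersetCard (n + 1), C (c C' ^ 2) *
    ∏ z ∈ E \ C', C (detWith gS (gS z) C')⁻¹ * lin (detSecondRow (gS z) W)
  set P₂ : MvPolynomial (Fin 2) F := C (r ^ 2) * (∏ i, lin (α i)) ^ 2
  have hdet : ∀ z y, eval (π y) (lin (detSecondRow (gS z) W)) = detSecondRow (gS z) W y :=
    fun z => hlin _ (detSecondRow_apply_self (gS z) W)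
  have h₁ : ∀ y, eval (π y) P₁ = phiPoly 2 gS c E (Fin.cons y W) := fun y => by
    simp only [P₁, phiPoly, map_sum, map_mul, map_prod, eval_C, hdet, detSecondRow_apply,
      detRows_eq_det_cons, div_eq_inv_mul]
    -- `phiPoly` sums over `(n + 1)`-subsets written as `n + 2 - 1`
    rfl
  have h₂ : ∀ y, eval (π y) P₂ = r ^ 2 * f y ^ 2 := fun y => by
    simp [P₂, fun i => hlin (α i) (hαW i), hfα]
  have hP : (P₁ - P₂).IsHomogeneous (2 * t) := by
    refine .sub (.sum _ _ _ fun C' hC' => ?_) ?_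
    · obtain ⟨hC'E, hC'⟩ := mem_powersetCard.mp hC'
      have hcard : #(E \ C') = 2 * t := by
        rw [card_sdiff_of_subset hC'E]
        omega
      exact hcard ▸ (isHomogeneous_prod_card fun z _ => (hlin_hom _).C_mul _).C_mul _
    · have := ((isHomogeneous_prod_card (s := univ) fun i _ => hlin_hom (α i)).pow 2).C_mul (r ^ 2)
      rw [card_univ, Fintype.card_fin, mul_comm t 2] at this
      exact this
  have hzero := hP.eq_zero_of_eval_eq_zero (E \ A) (fun e => π (gS e)) ?_ ?_ ?_
  · have := congrArg (MvPolynomial.eval (π x)) hzero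
    rwa [map_sub, map_zero, h₁, h₂, sub_eq_zero] at this
  · have := le_card_sdiff A E
    omega
  · intro e he e' he' hne
    exact hπ e (mem_sdiff.mp he).2 e' (mem_sdiff.mp he').2 hne
  · intro e he
    rw [map_sub, h₁, h₂, hnode e he, sub_self]

lemma Finset.injective_cons_orderEmbOfFin {α : Type*} [LinearOrder α] {s : Finset α} {n : ℕ}
    (h : #s = n) {y : α} (hy : y ∉ s) :
    Injective (Fin.cons y (s.orderEmbOfFin h) : Fin (n + 1) → α) :=
  Fin.cons_injective_iff.mpr ⟨by simpa using hy, (s.orderEmbOfFin h).injective⟩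

lemma Finset.range_cons_orderEmbOfFin {α : Type*} [LinearOrder α] [DecidableEq α] {s : Finset α}
    {n : ℕ} (h : #s = n) (y : α) :
    Set.range (Fin.cons y (s.orderEmbOfFin h) : Fin (n + 1) → α) = ↑(insert y s) := by
  rw [Fin.range_cons, range_orderEmbOfFin, coe_insert]

lemma CompatibleFamilies.sq_eq {k m t : ℕ} {g : Fin m → Fin k → F}
    {f : Finset (Fin m) → (Fin k → F) → F} {a c : Finset (Fin m) → F}
    (h : CompatibleFamilies t g f a c) {A : Finset (Fin m)} (hA : #A = k - 2) {e : Fin m}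
    (he : e ∉ A) : c (insert e A) ^ 2 = a A ^ 2 * f A (g e) ^ 2 := by
  rw [h.2.2 A hA e he, mul_pow, mul_pow, ← pow_mul, mul_comm _ 2, pow_mul, neg_one_sq, one_pow,
    one_mul]

theorem phiPoly_cons_eq_sq {n M t : ℕ} {gS : Fin M ↪ (Fin (n + 2) → F)}
    (hS : IsArc (Set.range gS)) (hM : n + 2 ≤ M) {f : Finset (Fin M) → (Fin (n + 2) → F) → F}
    (hf : ∀ A : Finset (Fin M), #A = n → IsTangentPoly t (Set.range gS) (gS '' ↑A) (f A))
    {a c : Finset (Fin M) → F} (hcomp : CompatibleFamilies t gS f a c) {E : Finset (Fin M)}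
    (hE : #E = n + 1 + 2 * t) (A : Finset (Fin M)) (hA : #A = n) (x : Fin (n + 2) → F) :
    phiPoly 2 gS c E (Fin.cons x (gS ∘ A.orderEmbOfFin hA) : Fin (n + 1) → Fin (n + 2) → F) =
      a A ^ 2 * f A x ^ 2 := by
  refine phiPoly_cons_eq_of_nodes hS hM hA (hf A hA) c (a A) hE (fun e he => ?_) x
  obtain ⟨heE, heA⟩ := mem_sdiff.mp he
  rw [← hcomp.sq_eq hA heA, ← Fin.comp_cons]
  by_cases hAE : A ⊆ E
  · have hC : #(insert e A) = n + 1 := by rw [card_insert_of_notMem heA, hA]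
    rw [phiPoly_comp_eq_of_range_eq 2 gS c hE (injective_cons_orderEmbOfFin hA heA)
      ((insert e A).orderEmbOfFin hC).injective (by rw [range_cons_orderEmbOfFin,
      range_orderEmbOfFin])]
    exact phiPoly_orderEmbOfFin 2 hS c (insert_subset heE hAE) hC
  · obtain ⟨a₀, ha₀A, ha₀E⟩ := not_subset.mp hAE
    set A' := insert e (A.erase a₀)
    have hA' : #A' = n := by
      have := card_pos.mpr ⟨a₀, ha₀A⟩
      rw [card_insert_of_notMem (fun h => heA (mem_of_mem_erase h)), card_erase_of_mem ha₀A]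
      omega
    have ha₀A' : a₀ ∉ A' := by
      simp only [A', mem_insert, mem_erase, ne_eq, not_true_eq_false, false_and, or_false]
      rintro rfl
      exact ha₀E heE
    have hins : insert a₀ A' = insert e A := by
      rw [insert_comm, insert_erase ha₀A]
    -- discharges the termination goal of the recursive call below
    have hlt : #(A' \ E) < #(A \ E) := by
      refine card_lt_card ⟨fun y hy => ?_, not_subset.mpr ⟨a₀, mem_sdiff.mpr ⟨ha₀A, ha₀E⟩, ?_⟩⟩
      · simp only [A', mem_sdiff, mem_insert, mem_erase] at hy ⊢
        grind
      · simp [ha₀A']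
    rw [phiPoly_comp_eq_of_range_eq 2 gS c hE (injective_cons_orderEmbOfFin hA heA)
      (injective_cons_orderEmbOfFin hA' ha₀A') (by rw [range_cons_orderEmbOfFin,
      range_cons_orderEmbOfFin, hins]), Fin.comp_cons,
      phiPoly_cons_eq_sq hS hM hf hcomp hE A' hA' (gS a₀), ← hcomp.sq_eq hA' ha₀A', hins]
termination_by #(A \ E)

theorem stmt14 {k M t : ℕ} (hk : 3 ≤ k)
    (gS : Fin M ↪ (Fin k → F)) (hS : IsArc (Set.range gS)) (hMk : k ≤ M)
    (f : Finset (Fin M) → (Fin k → F) → F)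
    (hf : ∀ A : Finset (Fin M), A.card = k - 2 →
      IsTangentPoly t (Set.range gS) (⇑gS '' ↑A) (f A))
    (a c : Finset (Fin M) → F)
    (hcomp : CompatibleFamilies t (⇑gS) f a c)
    (E : Finset (Fin M)) (hE : E.card = k + 2 * t - 1)
    (A : Finset (Fin M)) (hA : A.card = k - 2) (X : Fin k → F) :
    phiPoly 2 (⇑gS) c E
        ((Fin.cons X fun j => gS (A.orderEmbOfFin hA j)) ∘
          Fin.cast (by omega : k - 1 = k - 2 + 1))
      = (a A) ^ 2 * (f A X) ^ 2 := by
  obtain ⟨n, rfl⟩ : ∃ n, k = n + 2 := ⟨k - 2, by omega⟩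
  exact phiPoly_cons_eq_sq hS hMk hf hcomp (by omega) A hA X
end

section
/- Let k ≥ 3 be an integer, let X be a set with k elements, and let F be a field of characteristic different from 2. The inclusion matrix over F whose rows are indexed by the subsets of X of size k−1 and whose columns are indexed by the subsets of X of size k−2, with (C, A) entry equal to 1 if A ⊆ C and 0 otherwise, has rank k, i.e., full row rank. -/
open Finset

variable {F : Type*} [Field F]

/-!
Index each row `C` by the point `x` it misses, so that `A ⊆ C` iff `x ∉ A`, and each column `A`
by the pair `{y, z} = Aᶜ`. A linear relation `∑ₓ uₓ rₓ = 0` among the rows, read off at the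
column `{y, z}`, says `u y + u z = 0`. For three distinct points `x, y, z` these three relations
give `2 u x = 0` (the triangle is an odd cycle), so `u = 0` when `2 ≠ 0` in `K`: the `k` rows are
linearly independent.
-/

section
variable {X : Type*} [Fintype X] [DecidableEq X]

theorem Finset.exists_eq_univ_erase_of_card_eq_card_sub_one [Nonempty X] {C : Finset X}
    (hC : #C = Fintype.card X - 1) : ∃ x, C = univ.erase x := by
  have hpos := Fintype.card_pos (α := X)
  obtain ⟨x, hx⟩ := card_eq_one.1 (show #Cᶜ = 1 by rw [card_compl]; omega)
  exact ⟨x, by rw [← compl_singleton, ← hx, compl_compl]⟩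

@[simps! apply_coe]
noncomputable def univEraseEquiv [Nonempty X] : X ≃ {C : Finset X // #C = Fintype.card X - 1} :=
  Equiv.ofBijective (fun x => ⟨univ.erase x, by rw [card_erase_of_mem (mem_univ x), card_univ]⟩)
    ⟨fun x y hxy => (erase_inj univ (mem_univ x)).1 (congrArg Subtype.val hxy),
     fun C => (C.1.exists_eq_univ_erase_of_card_eq_card_sub_one C.2).imp
       fun _ hx => Subtype.ext hx.symm⟩

theorem linearIndependent_notMem_indicator {K : Type*} [Field K] (hX : 3 ≤ Fintype.card X)
    (hchar : ringChar K ≠ 2) :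
    LinearIndependent K fun (x : X) (A : {A : Finset X // #A = Fintype.card X - 2}) =>
      if x ∉ A.1 then (1 : K) else 0 := by
  rw [Fintype.linearIndependent_iff]
  intro u hu x
  have hpair : ∀ y z, y ≠ z → u y + u z = 0 := by
    intro y z hyz
    have := congrFun hu ⟨{y, z}ᶜ, by rw [card_compl, card_pair hyz]⟩
    simpa only [Finset.sum_apply, Pi.smul_apply, smul_eq_mul, mem_compl, not_not, mul_ite,
      mul_one, mul_zero, Pi.zero_apply, sum_ite_mem, univ_inter, sum_pair hyz] using this
  obtain ⟨y, hy, z, hz, hyz⟩ := one_lt_card.1 (show 1 < #(univ.erase x) by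
    rw [card_erase_of_mem (mem_univ x), card_univ]; omega)
  have htwo : 2 * u x = 0 := by
    linear_combination hpair x y (ne_of_mem_erase hy).symm + hpair x z (ne_of_mem_erase hz).symm
      - hpair y z hyz
  exact (mul_eq_zero.1 htwo).resolve_left (Ring.two_ne_zero hchar)

end

theorem stmt17 {X : Type*} [Fintype X] [DecidableEq X] {k : ℕ} (hk : 3 ≤ k)
    (hX : Fintype.card X = k) (K : Type*) [Field K] (hchar : ringChar K ≠ 2) :
    Matrix.rank (Matrix.of fun (C : {C : Finset X // C.card = k - 1})
        (A : {A : Finset X // A.card = k - 2}) =>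
      if A.1 ⊆ C.1 then (1 : K) else 0) = k := by
  subst hX
  have : Nonempty X := Fintype.card_pos_iff.1 (by omega)
  have hrows : LinearIndependent K fun (C : {C : Finset X // #C = Fintype.card X - 1})
      (A : {A : Finset X // #A = Fintype.card X - 2}) => if A.1 ⊆ C.1 then (1 : K) else 0 := by
    rw [← linearIndependent_equiv univEraseEquiv]
    convert linearIndependent_notMem_indicator hk hchar using 1
    ext x A
    simp [subset_erase]
  refine hrows.rank_matrix.trans ?_
  rw [Fintype.card_finset_len, Nat.choose_symm (by omega), Nat.choose_one_right]
end
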